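/- arXiv:1805.02468 — 5 statements merged into one kernel-verified Lean document; each statement's English description precedes it below -/
import Mathlib

section
/- If u : ℝ → ℓ²(ℤ) is a C¹ solution of the DNLS equation i u'(t) = Δu(t) + ν|u(t)|²u(t) with ν ∈ {−1,1}, then the ℓ² norm is conserved: ‖u(t)‖_{ℓ²} = ‖u(0)‖_{ℓ²} for all t. -/
/-!
Since `d/dt ‖u‖² = 2 Re ⟪u', u⟫`, it suffices that `⟪u', u⟫ = i ⟪Δu + ν|u|²u, u⟫` is purely
imaginary. Pointwise, the diagonal and cubic terms of `⟪Δu + ν|u|²u, u⟫` are real, and the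
imaginary parts of the two hopping terms are `s (g-1) - s g` with
`s g = Im (u_g conj u_{g+1})`; this telescopes to zero because `s` is summable.
-/

noncomputable section

/-- The Hilbert space `ℓ²(ℤ)`. -/
abbrev H : Type := lp (fun _ : ℤ => ℂ) 2

open Complex ComplexConjugate

theorem Memℓp.comp_equiv {α β E : Type*} [NormedAddCommGroup E] {p : ENNReal} {f : α → E}
    (hf : Memℓp f p) (e : β ≃ α) : Memℓp (fun i => f (e i)) p := by
  rcases p.trichotomy with rfl | rfl | hp
  · rw [memℓp_zero_iff] at hf ⊢
    exact hf.preimage e.injective.injOn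
  · rw [memℓp_infty_iff] at hf ⊢
    rwa [← e.surjective.range_comp] at hf
  · rw [memℓp_gen_iff hp] at hf ⊢
    exact e.summable_iff.2 hf

theorem tsum_sub_comp_sub_one {E : Type*} [AddCommGroup E] [TopologicalSpace E]
    [IsTopologicalAddGroup E] [T2Space E] {f : ℤ → E} (hf : Summable f) :
    ∑' n, (f (n - 1) - f n) = 0 := by
  have hf' : Summable fun n => f (n - 1) := (Equiv.subRight 1).summable_iff.2 hf
  rw [hf'.tsum_sub hf, sub_eq_zero]
  exact (Equiv.subRight 1).tsum_eq f

theorem re_mul_conj_eq_of_dnls {ν : ℝ} {x y z w : ℂ}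
    (h : I * w = z - 2 * y + x + ν * (‖y‖ : ℂ) ^ 2 * y) :
    (y * conj w).re = (x * conj y).im - (y * conj z).im := by
  have hw : w = -I * (z - 2 * y + x + ν * (‖y‖ : ℂ) ^ 2 * y) := by
    rw [← h, ← mul_assoc]; simp
  subst hw
  simp only [← ofReal_pow, neg_mul, map_neg, map_mul, conj_I, map_add, map_sub, conj_ofReal,
    neg_neg, mul_re, I_re, add_re, sub_re, conj_re, re_ofNat, conj_im, im_ofNat, neg_zero, mul_neg,
    zero_mul, sub_zero, ofReal_re, ofReal_im, mul_zero, mul_im, add_zero, I_im, add_im, sub_im,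
    sub_neg_eq_add, one_mul, zero_sub, neg_add_rev, zero_add]
  ring

theorem summable_mul_conj_comp_add (a : H) (k : ℤ) :
    Summable fun g => a g * conj (a (g + k)) := by
  have := lp.summable_inner (𝕜 := ℂ) (⟨_, a.2.comp_equiv (Equiv.addRight k)⟩ : H) a
  simpa only [RCLike.inner_apply, Equiv.coe_addRight] using this

theorem re_inner_eq_zero_of_dnls {ν : ℝ} {a a' : H}
    (h : ∀ g, I * a' g = a (g + 1) - 2 * a g + a (g - 1) + ν * (‖a g‖ : ℂ) ^ 2 * a g) :
    (inner ℂ a' a).re = 0 := by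
  have hs : Summable fun g => (a g * conj (a (g + 1))).im :=
    (summable_mul_conj_comp_add a 1).mapL imCLM
  rw [lp.inner_eq_tsum, Complex.re_tsum (lp.summable_inner a' a)]
  simp only [RCLike.inner_apply, re_mul_conj_eq_of_dnls (h _)]
  simpa using tsum_sub_comp_sub_one hs

theorem norm_eq_norm_zero_of_re_inner_deriv_eq_zero {𝕜 E : Type*} [RCLike 𝕜]
    [NormedAddCommGroup E] [InnerProductSpace 𝕜 E] [NormedSpace ℝ E] {u u' : ℝ → E}
    (hu : ∀ t, HasDerivAt u (u' t) t) (h : ∀ t, RCLike.re (inner 𝕜 (u' t) (u t)) = 0) (t : ℝ) :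
    ‖u t‖ = ‖u 0‖ := by
  have hderiv : ∀ s, HasDerivAt (fun s => ‖u s‖ ^ 2) 0 s := by
    intro s
    have hre := RCLike.reCLM.hasFDerivAt.comp_hasDerivAt s ((hu s).inner 𝕜 (hu s))
    simp only [Function.comp_def, RCLike.reCLM_apply, inner_self_eq_norm_sq, map_add] at hre
    rwa [inner_re_symm, h s, add_zero] at hre
  have hconst : ‖u t‖ ^ 2 = ‖u 0‖ ^ 2 :=
    is_const_of_deriv_eq_zero (fun s => (hderiv s).differentiableAt) (fun s => (hderiv s).deriv) t 0
  exact (sq_eq_sq₀ (norm_nonneg _) (norm_nonneg _)).1 hconst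

theorem DNLS_l2_conservation_general (ν : ℝ)
    (u u' : ℝ → H) (hderiv : ∀ t, HasDerivAt u (u' t) t)
    (heq : ∀ (t : ℝ) (g : ℤ),
      Complex.I * (u' t : ℤ → ℂ) g =
        ((u t : ℤ → ℂ) (g + 1) - 2 * (u t : ℤ → ℂ) g + (u t : ℤ → ℂ) (g - 1)) +
          ν * (‖(u t : ℤ → ℂ) g‖ : ℂ) ^ 2 * (u t : ℤ → ℂ) g) :
    ∀ t : ℝ, ‖u t‖ = ‖u 0‖ :=
  norm_eq_norm_zero_of_re_inner_deriv_eq_zero (𝕜 := ℂ) hderiv fun t =>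
    re_inner_eq_zero_of_dnls (heq t)

/-- A `C¹` solution of the DNLS equation `i u' = Δu + ν|u|²u` conserves the `ℓ²` norm. -/
theorem DNLS_l2_conservation (ν : ℝ) (hν : ν = 1 ∨ ν = -1)
    (u u' : ℝ → H) (hu' : Continuous u') (hderiv : ∀ t, HasDerivAt u (u' t) t)
    (heq : ∀ (t : ℝ) (g : ℤ),
      Complex.I * (u' t : ℤ → ℂ) g =
        ((u t : ℤ → ℂ) (g + 1) - 2 * (u t : ℤ → ℂ) g + (u t : ℤ → ℂ) (g - 1)) +
          ν * (‖(u t : ℤ → ℂ) g‖ : ℂ) ^ 2 * (u t : ℤ → ℂ) g) :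
    ∀ t : ℝ, ‖u t‖ = ‖u 0‖ :=
  DNLS_l2_conservation_general ν u u' hderiv heq
end
end

section
/- Bernstein-type identification of the discrete Laplacian in Fourier variables: if u ∈ ℓ²(ℤ) has Shannon interpolation U with Fourier transform Û supported in [−π,π], then the Shannon interpolation of Δu has Fourier transform ω ↦ (2cos ω − 2) Û(ω) = −4 sin²(ω/2) Û(ω) on (−π,π). -/
/-!
Since `2 cos ω = e^{iω} + e^{-iω}`, multiplying `Û` by `2 cos ω - 2` turns the Fourier
inversion integral at `g` into the inversion integrals at `g + 1` and `g - 1` minus twice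
the one at `g`, by linearity of the integral.
-/

open MeasureTheory Complex

/-- Inverse of the transform `Û(ω) = ∫ U(x) e^{ixω} dx`; not Mathlib's `𝓕⁻`, which uses
`e^{2πixω}`. -/
noncomputable def inverseFourier (F : ℝ → ℂ) (x : ℝ) : ℂ :=
  ((1 / (2 * Real.pi) : ℝ) : ℂ) * ∫ ω : ℝ, F ω * exp (-I * x * ω)

theorem MeasureTheory.Integrable.mul_exp_neg_I_mul {F : ℝ → ℂ} (hF : Integrable F) (x : ℝ) :
    Integrable (fun ω : ℝ => F ω * exp (-I * x * ω)) :=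
  hF.mul_bdd (c := 1) (by fun_prop) (.of_forall fun ω => by simp [norm_exp])

theorem two_cos_sub_two_mul_exp_neg_I_mul (x ω : ℝ) :
    ((2 * Real.cos ω - 2 : ℝ) : ℂ) * exp (-I * x * ω)
      = exp (-I * ↑(x + 1) * ω) - 2 * exp (-I * x * ω) + exp (-I * ↑(x - 1) * ω) := by
  have hplus : exp (-I * ↑(x + 1) * ω) = exp (-I * x * ω) * exp (-ω * I) := by
    rw [← exp_add]; push_cast; ring_nf
  have hminus : exp (-I * ↑(x - 1) * ω) = exp (-I * x * ω) * exp (ω * I) := by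
    rw [← exp_add]; push_cast; ring_nf
  rw [hplus, hminus]
  push_cast
  rw [two_cos]
  ring

theorem inverseFourier_two_cos_sub_two_mul {F : ℝ → ℂ} (hF : Integrable F) (x : ℝ) :
    inverseFourier (fun ω => ((2 * Real.cos ω - 2 : ℝ) : ℂ) * F ω) x
      = inverseFourier F (x + 1) - 2 * inverseFourier F x + inverseFourier F (x - 1) := by
  have hplus := hF.mul_exp_neg_I_mul (x + 1)
  have hx := (hF.mul_exp_neg_I_mul x).const_mul 2
  have hminus := hF.mul_exp_neg_I_mul (x - 1)
  have hdiff : Integrable fun ω : ℝ =>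
      F ω * exp (-I * ↑(x + 1) * ω) - 2 * (F ω * exp (-I * x * ω)) := hplus.sub hx
  have hintegrand : (fun ω : ℝ => ((2 * Real.cos ω - 2 : ℝ) : ℂ) * F ω * exp (-I * x * ω))
      = fun ω => F ω * exp (-I * ↑(x + 1) * ω) - 2 * (F ω * exp (-I * x * ω))
          + F ω * exp (-I * ↑(x - 1) * ω) := by
    funext ω
    rw [mul_right_comm, two_cos_sub_two_mul_exp_neg_I_mul]
    ring
  simp only [inverseFourier]
  rw [hintegrand, integral_add hdiff hminus, integral_sub hplus hx, integral_const_mul]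
  ring

theorem shannon_fourier_discrete_laplacian_general (u : ℤ → ℂ)
    (Uhat : ℝ → ℂ) (hint : Integrable Uhat)
    (hinterp : ∀ g : ℤ,
      u g = ((1 / (2 * Real.pi) : ℝ) : ℂ) *
        ∫ ω : ℝ, Uhat ω * Complex.exp (-Complex.I * g * ω)) :
    ∀ g : ℤ,
      ((1 / (2 * Real.pi) : ℝ) : ℂ) *
          ∫ ω : ℝ, ((2 * Real.cos ω - 2 : ℝ) : ℂ) * Uhat ω * Complex.exp (-Complex.I * g * ω)
        = u (g + 1) - 2 * u g + u (g - 1) := by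
  have hsample (g : ℤ) : u g = inverseFourier Uhat g := by
    rw [hinterp, inverseFourier, ofReal_intCast]
  intro g
  rw [hsample, hsample, hsample, Int.cast_add, Int.cast_sub, Int.cast_one,
    ← inverseFourier_two_cos_sub_two_mul hint, inverseFourier, ofReal_intCast]

/-- Identification of the discrete Laplacian in Fourier variables: let `u ∈ ℓ²(ℤ)` and let
`Û` (integrable, square integrable, supported in `[-π,π]`) be the Fourier transform of the
Shannon interpolation `U` of `u`, i.e. `U(x) = (1/2π) ∫ Û(ω) e^{-ixω} dω` and `U(g) = u_g`
for `g ∈ ℤ`.  Then the band-limited function with Fourier transform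
`ω ↦ (2 cos ω - 2) Û(ω)` interpolates `Δu` on `ℤ`; that is, it is the Shannon
interpolation of `Δu`. -/
theorem shannon_fourier_discrete_laplacian (u : ℤ → ℂ) (hu : Memℓp u 2)
    (Uhat : ℝ → ℂ) (hint : Integrable Uhat) (hL2 : MemLp Uhat 2 volume)
    (hsupp : Function.support Uhat ⊆ Set.Icc (-Real.pi) Real.pi)
    (hinterp : ∀ g : ℤ,
      u g = ((1 / (2 * Real.pi) : ℝ) : ℂ) *
        ∫ ω : ℝ, Uhat ω * Complex.exp (-Complex.I * g * ω)) :
    ∀ g : ℤ,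
      ((1 / (2 * Real.pi) : ℝ) : ℂ) *
          ∫ ω : ℝ, ((2 * Real.cos ω - 2 : ℝ) : ℂ) * Uhat ω * Complex.exp (-Complex.I * g * ω)
        = u (g + 1) - 2 * u g + u (g - 1) :=
  shannon_fourier_discrete_laplacian_general u Uhat hint hinterp
end

section
/- For every k ∈ ℕ and every (w₁,w₂,w₋₁,w₋₂) with w₁+w₂ ≡ w₋₁+w₋₂ (mod 2π), |cos((2k+1)w₁)+cos((2k+1)w₂)−cos((2k+1)w₋₁)−cos((2k+1)w₋₂)| ≤ (2k+1)³ |cos w₁ + cos w₂ − cos w₋₁ − cos w₋₂|. -/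
/-!
Shifting `wm₂` by `2πj` changes neither side and makes the resonance exact,
`w₁ + w₂ = wm₁ + wm₂`. On the exact resonance `D₂ cos` factors as
`-4 cos((w₁+w₂)/2) sin((w₁-wm₁)/2) sin((w₁-wm₂)/2)`, and the same factorization for the
frequencies multiplied by `n = 2k+1` compares the two sides factor by factor, using
`|sin(n x)| ≤ n |sin x|` and, for odd `n`, `|cos(n x)| ≤ n |cos x|`.
-/

open Real

namespace Real

theorem abs_sin_nat_mul_le (n : ℕ) (x : ℝ) : |sin (n * x)| ≤ n * |sin x| := by
  induction n with
  | zero => simp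
  | succ n ih =>
    calc |sin ((n + 1 : ℕ) * x)| = |sin (n * x) * cos x + cos (n * x) * sin x| := by
          push_cast; rw [add_mul, one_mul, sin_add]
      _ ≤ |sin (n * x)| * |cos x| + |cos (n * x)| * |sin x| := by
          rw [← abs_mul, ← abs_mul]; exact abs_add_le _ _
      _ ≤ n * |sin x| * 1 + 1 * |sin x| := by
          gcongr
          exacts [abs_cos_le_one x, abs_cos_le_one _]
      _ = (n + 1 : ℕ) * |sin x| := by push_cast; ring

theorem abs_cos_nat_mul_le_of_odd {n : ℕ} (hn : Odd n) (x : ℝ) :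
    |cos (n * x)| ≤ n * |cos x| := by
  obtain ⟨k, rfl⟩ := hn
  -- odd multiples turn `cos` into `± sin` of the complementary angle `π/2 - x`
  have hsin : sin ((2 * k + 1 : ℕ) * (π / 2 - x)) = (-1) ^ k * cos ((2 * k + 1 : ℕ) * x) := by
    rw [show ((2 * k + 1 : ℕ) : ℝ) * (π / 2 - x) = π / 2 - (2 * k + 1 : ℕ) * x + k * π by
      push_cast; ring, sin_add_nat_mul_pi, sin_pi_div_two_sub]
  calc |cos ((2 * k + 1 : ℕ) * x)| = |sin ((2 * k + 1 : ℕ) * (π / 2 - x))| := by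
        rw [hsin, abs_mul, abs_pow, abs_neg, abs_one, one_pow, one_mul]
    _ ≤ (2 * k + 1 : ℕ) * |sin (π / 2 - x)| := abs_sin_nat_mul_le _ _
    _ = (2 * k + 1 : ℕ) * |cos x| := by rw [sin_pi_div_two_sub]

theorem cos_add_cos_sub_cos_sub_cos_of_add_eq {a b c d : ℝ} (h : a + b = c + d) :
    cos a + cos b - cos c - cos d
      = -4 * cos ((a + b) / 2) * sin ((a - c) / 2) * sin ((a - d) / 2) := by
  set x := (a + b) / 2 with hx
  set y := (a - c) / 2 with hy
  set z := (a - d) / 2 with hz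
  rw [show a = x + y + z by linarith, show b = x - y - z by linarith,
    show c = x - y + z by linarith, show d = x + y - z by linarith]
  simp only [cos_add, cos_sub, sin_add, sin_sub]
  ring

theorem abs_cos_nat_mul_add_cos_sub_cos_sub_cos_le_of_odd {n : ℕ} (hn : Odd n)
    {a b c d : ℝ} (h : a + b = c + d) :
    |cos (n * a) + cos (n * b) - cos (n * c) - cos (n * d)|
      ≤ n ^ 3 * |cos a + cos b - cos c - cos d| := by
  have hn_mul : n * a + n * b = n * c + n * d := by rw [← mul_add, h, mul_add]
  rw [cos_add_cos_sub_cos_sub_cos_of_add_eq h, cos_add_cos_sub_cos_sub_cos_of_add_eq hn_mul,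
    ← mul_add, ← mul_sub, ← mul_sub, mul_div_assoc, mul_div_assoc, mul_div_assoc]
  simp only [abs_mul]
  calc |(-4 : ℝ)| * |cos (n * ((a + b) / 2))| * |sin (n * ((a - c) / 2))|
        * |sin (n * ((a - d) / 2))|
      ≤ |(-4 : ℝ)| * (n * |cos ((a + b) / 2)|) * (n * |sin ((a - c) / 2)|)
        * (n * |sin ((a - d) / 2)|) := by
        gcongr
        exacts [abs_cos_nat_mul_le_of_odd hn _, abs_sin_nat_mul_le _ _, abs_sin_nat_mul_le _ _]
    _ = n ^ 3 * (|(-4 : ℝ)| * |cos ((a + b) / 2)| * |sin ((a - c) / 2)|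
        * |sin ((a - d) / 2)|) := by ring

end Real

/-- On the resonant manifold `w₁ + w₂ ≡ w₋₁ + w₋₂ (mod 2π)`, the divided difference of
`cos((2k+1)·)` is controlled by that of `cos`:
`|D₂ cos_k(w)| ≤ (2k+1)³ |D₂ cos(w)|`. -/
theorem D2_cos_k_le (k : ℕ) (w₁ w₂ wm₁ wm₂ : ℝ)
    (hres : ∃ j : ℤ, w₁ + w₂ - wm₁ - wm₂ = 2 * Real.pi * j) :
    |Real.cos ((2 * k + 1) * w₁) + Real.cos ((2 * k + 1) * w₂)
        - Real.cos ((2 * k + 1) * wm₁) - Real.cos ((2 * k + 1) * wm₂)|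
      ≤ (2 * k + 1) ^ 3 * |Real.cos w₁ + Real.cos w₂ - Real.cos wm₁ - Real.cos wm₂| := by
  obtain ⟨j, hj⟩ := hres
  have hexact : w₁ + w₂ = wm₁ + (wm₂ + j * (2 * π)) := by linarith
  have hshift : cos ((2 * k + 1) * (wm₂ + j * (2 * π))) = cos ((2 * k + 1) * wm₂) := by
    rw [mul_add, show (2 * k + 1) * (j * (2 * π)) = ((2 * k + 1) * j : ℤ) * (2 * π) by
      push_cast; ring, cos_add_int_mul_two_pi]
  have key := abs_cos_nat_mul_add_cos_sub_cos_sub_cos_le_of_odd (odd_two_mul_add_one k) hexact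
  push_cast at key
  rwa [hshift, cos_add_int_mul_two_pi] at key
end

section
/- Divisibility estimate (key lemma for modified energies): let n ≥ 1 and let f ∈ C^∞(ℝ) be such that f(ω) = O(ω^{2n}) as ω → 0, f is even, and x ↦ f(x − π/2) − f(π/2) is odd. Then there exists C > 0 such that for every w = (w₁,w₂,w₋₁,w₋₂) with w₁+w₂ ≡ w₋₁+w₋₂ (mod 2π), |f(w₁)+f(w₂)−f(w₋₁)−f(w₋₂)| ≤ C |cos w₁ + cos w₂ − cos w₋₁ − cos w₋₂| · (w₁^{2n−2} + w₂^{2n−2} + w₋₁^{2n−2} + w₋₂^{2n−2}). -/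
open scoped Topology
open Real Set intervalIntegral Nat

namespace D2Div


noncomputable def del (x : ℝ) : ℝ := |x - 2*π*(round (x/(2*π)) : ℤ)|

lemma two_pi_pos : (0:ℝ) < 2*π := by positivity

lemma abs_eq_2pi (x : ℝ) (k : ℤ) : |x - 2*π*(k:ℝ)| = 2*π*|x/(2*π) - (k:ℝ)| := by
  have e : x - 2*π*(k:ℝ) = (2*π) * (x/(2*π) - (k:ℝ)) := by field_simp
  rw [e, abs_mul, abs_of_pos two_pi_pos]

lemma del_le (x : ℝ) (k : ℤ) : del x ≤ |x - 2*π*(k:ℝ)| := by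
  unfold del
  rw [abs_eq_2pi, abs_eq_2pi]
  have h1 : |x/(2*π) - (round (x/(2*π)) : ℝ)| ≤ 1/2 := abs_sub_round _
  rcases eq_or_ne k (round (x/(2*π))) with rfl | hk
  · exact le_refl _
  · have h2 : (1:ℝ) ≤ |(round (x/(2*π)) : ℝ) - (k:ℝ)| := by
      have : (1:ℤ) ≤ |round (x/(2*π)) - k| := Int.one_le_abs (sub_ne_zero.mpr (Ne.symm hk))
      calc (1:ℝ) = ((1:ℤ):ℝ) := by norm_num
      _ ≤ ((|round (x/(2*π)) - k| : ℤ) : ℝ) := by exact_mod_cast this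
      _ = |(round (x/(2*π)) : ℝ) - (k:ℝ)| := by push_cast; ring_nf
    have h4 : |(round (x/(2*π)):ℝ) - (k:ℝ)| ≤ |(round (x/(2*π)):ℝ) - x/(2*π)| + |x/(2*π) - (k:ℝ)| :=
      abs_sub_le _ _ _
    rw [abs_sub_comm ((round (x/(2*π)):ℝ)) (x/(2*π))] at h4
    have h3 : |x/(2*π) - (round (x/(2*π)) : ℝ)| ≤ |x/(2*π) - (k:ℝ)| := by linarith
    exact mul_le_mul_of_nonneg_left h3 (le_of_lt two_pi_pos)

lemma del_nonneg (x : ℝ) : 0 ≤ del x := abs_nonneg _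

lemma del_le_abs (x : ℝ) : del x ≤ |x| := by simpa using del_le x 0

lemma del_le_pi (x : ℝ) : del x ≤ π := by
  unfold del
  rw [abs_eq_2pi]
  have h1 : |x/(2*π) - (round (x/(2*π)) : ℝ)| ≤ 1/2 := abs_sub_round _
  nlinarith [Real.pi_pos]

lemma del_shift (x : ℝ) (k : ℤ) : del (x + 2*π*(k:ℝ)) = del x := by
  have h1 : ∀ (y : ℝ) (m : ℤ), del (y + 2*π*(m:ℝ)) ≤ del y := by
    intro y m
    have h := del_le (y + 2*π*(m:ℝ)) (m + round (y/(2*π)))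
    have e : y + 2*π*(m:ℝ) - 2*π*(((m + round (y/(2*π))) : ℤ):ℝ)
        = y - 2*π*((round (y/(2*π)) : ℤ):ℝ) := by push_cast; ring
    rw [e] at h
    exact h
  refine le_antisymm (h1 x k) ?_
  have h2 := h1 (x + 2*π*(k:ℝ)) (-k)
  have e2 : x + 2*π*(k:ℝ) + 2*π*((-k : ℤ):ℝ) = x := by push_cast; ring
  rw [e2] at h2
  exact h2

lemma del_neg (x : ℝ) : del (-x) = del x := by
  have h1 : ∀ y : ℝ, del (-y) ≤ del y := by
    intro y
    have h := del_le (-y) (-(round (y/(2*π))))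
    have e : -y - 2*π*((-(round (y/(2*π))) : ℤ):ℝ) = -(y - 2*π*((round (y/(2*π)):ℤ):ℝ)) := by
      push_cast; ring
    rw [e, abs_neg] at h
    exact h
  refine le_antisymm (h1 x) ?_
  have := h1 (-x)
  rwa [neg_neg] at this

lemma del_dist (x y : ℝ) : del x ≤ del y + |x - y| := by
  have h := del_le x (round (y/(2*π)))
  have e : x - 2*π*((round (y/(2*π)):ℤ):ℝ)
      = (y - 2*π*((round (y/(2*π)):ℤ):ℝ)) + (x - y) := by ring
  calc del x ≤ |x - 2*π*((round (y/(2*π)):ℤ):ℝ)| := h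
  _ ≤ |y - 2*π*((round (y/(2*π)):ℤ):ℝ)| + |x - y| := by rw [e]; exact abs_add_le _ _
  _ = del y + |x - y| := rfl

lemma del_sub (x y : ℝ) : del (x - y) ≤ del x + del y := by
  have h := del_le (x - y) (round (x/(2*π)) - round (y/(2*π)))
  have e : x - y - 2*π*(((round (x/(2*π)) - round (y/(2*π))) : ℤ):ℝ)
      = (x - 2*π*((round (x/(2*π)):ℤ):ℝ)) - (y - 2*π*((round (y/(2*π)):ℤ):ℝ)) := by
    push_cast; ring
  calc del (x - y) ≤ |x - y - 2*π*(((round (x/(2*π)) - round (y/(2*π))) : ℤ):ℝ)| := h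
  _ = |(x - 2*π*((round (x/(2*π)):ℤ):ℝ)) - (y - 2*π*((round (y/(2*π)):ℤ):ℝ))| := by rw [e]
  _ ≤ |x - 2*π*((round (x/(2*π)):ℤ):ℝ)| + |y - 2*π*((round (y/(2*π)):ℤ):ℝ)| := abs_sub _ _
  _ = del x + del y := rfl

lemma del_eq_abs {x : ℝ} (h : |x| ≤ π) : del x = |x| := by
  refine le_antisymm (del_le_abs x) ?_
  unfold del
  rcases eq_or_ne (round (x/(2*π))) 0 with h0 | h0
  · simp [h0]
  · have h1 : (1:ℝ) ≤ |((round (x/(2*π)) : ℤ) : ℝ)| := by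
      have : (1:ℤ) ≤ |round (x/(2*π))| := Int.one_le_abs h0
      exact_mod_cast this
    have h2 : |2*π*((round (x/(2*π)):ℤ):ℝ)| - |x| ≤ |x - 2*π*((round (x/(2*π)):ℤ):ℝ)| := by
      have := abs_sub_abs_le_abs_sub (2*π*((round (x/(2*π)):ℤ):ℝ)) x
      rw [abs_sub_comm] at this
      linarith
    have h3 : |2*π*((round (x/(2*π)):ℤ):ℝ)| = 2*π*|((round (x/(2*π)):ℤ):ℝ)| := by
      rw [abs_mul, abs_of_pos two_pi_pos]
    nlinarith [Real.pi_pos]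

lemma sin_shift (x : ℝ) (k : ℤ) : Real.sin (x + 2*π*(k:ℝ)) = Real.sin x := by
  rw [show x + 2*π*(k:ℝ) = x + (k:ℝ)*(2*π) by ring]
  exact Real.sin_add_int_mul_two_pi x k

lemma cos_shift (x : ℝ) (k : ℤ) : Real.cos (x + 2*π*(k:ℝ)) = Real.cos x := by
  rw [show x + 2*π*(k:ℝ) = x + (k:ℝ)*(2*π) by ring]
  exact Real.cos_add_int_mul_two_pi x k

lemma abs_arcsin_sin_le (x : ℝ) : |arcsin (Real.sin x)| ≤ del x := by
  obtain ⟨y, hy, hdel⟩ : ∃ y : ℝ, x = y + 2*π*((round (x/(2*π)):ℤ):ℝ) ∧ del x = |y| :=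
    ⟨x - 2*π*((round (x/(2*π)):ℤ):ℝ), by ring, rfl⟩
  have hsin : Real.sin x = Real.sin y := by rw [hy]; exact sin_shift y _
  have hyπ : |y| ≤ π := by rw [← hdel]; exact del_le_pi x
  rw [hsin, hdel]
  by_cases h1 : |y| ≤ π/2
  · rw [Real.arcsin_sin (by cases' abs_le.mp h1 with a b; linarith) (abs_le.mp h1).2]
  · push_neg at h1
    rcases abs_cases y with ⟨he, hpos⟩ | ⟨he, hneg⟩
    · have h2 : Real.sin y = Real.sin (π - y) := (Real.sin_pi_sub y).symm
      rw [he] at h1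
      have hyle : y ≤ π := by rw [he] at hyπ; exact hyπ
      rw [h2, Real.arcsin_sin (by linarith) (by linarith)]
      rw [abs_of_nonneg (by linarith : (0:ℝ) ≤ π - y), he]
      linarith
    · have h2 : Real.sin y = -Real.sin (π + y) := by
        have e : Real.sin (π + y) = Real.sin (-y) := by
          rw [← Real.sin_pi_sub (-y)]; ring_nf
        rw [e, Real.sin_neg]; ring
      rw [he] at h1
      have hyge : -π ≤ y := by rw [he] at hyπ; linarith
      rw [h2, Real.arcsin_neg, Real.arcsin_sin (by linarith) (by linarith)]
      rw [abs_neg, abs_of_nonneg (by linarith : (0:ℝ) ≤ π + y), he]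
      linarith



lemma contDiff_iteratedDeriv {g : ℝ → ℝ} (hg : ContDiff ℝ ((⊤:ℕ∞) : WithTop ℕ∞) g) (m : ℕ) :
    ContDiff ℝ ((⊤:ℕ∞) : WithTop ℕ∞) (iteratedDeriv m g) := by
  induction m with
  | zero => simpa using hg
  | succ k IHm =>
    rw [iteratedDeriv_succ]
    exact (contDiff_infty_iff_deriv.mp IHm).2

lemma iDW_eq {F : ℝ → ℝ} (hF : ContDiff ℝ ((⊤:ℕ∞) : WithTop ℕ∞) F) {s : Set ℝ}
    (hs : UniqueDiffOn ℝ s) (k : ℕ) :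
    ∀ {x : ℝ}, x ∈ s → iteratedDerivWithin k F s x = iteratedDeriv k F x := by
  induction k generalizing F with
  | zero => intro x _; simp
  | succ k IH =>
    intro x hx
    rw [iteratedDerivWithin_succ', iteratedDeriv_succ']
    have e : Set.EqOn (derivWithin F s) (deriv F) s := fun y hy =>
      ((hF.differentiable (by simp)) y).derivWithin (hs.uniqueDiffWithinAt hy)
    have h1 := iteratedDerivWithin_congr (n := k) e hx
    rw [h1]
    exact IH (contDiff_infty_iff_deriv.mp hF).2 hx

/-- Taylor's theorem specialization: all derivatives up to order `m` vanish at `0`. -/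
lemma taylor_vanish {g : ℝ → ℝ} (hg : ContDiff ℝ ((⊤:ℕ∞) : WithTop ℕ∞) g) (m : ℕ)
    (hvan : ∀ i ≤ m, iteratedDeriv i g 0 = 0) {x : ℝ} (hx : 0 < x) :
    ∃ ξ ∈ Ioo 0 x, g x = iteratedDeriv (m+1) g ξ * x^(m+1) / (m+1)! := by
  have hs : UniqueDiffOn ℝ (Icc (0:ℝ) x) := uniqueDiffOn_Icc hx
  have h0 : (0:ℝ) ∈ Icc (0:ℝ) x := left_mem_Icc.mpr hx.le
  have hcd : ContDiffOn ℝ m g (Icc 0 x) := (hg.of_le (by exact_mod_cast le_top)).contDiffOn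
  have hdiff : DifferentiableOn ℝ (iteratedDerivWithin m g (Icc 0 x)) (Ioo 0 x) := by
    have e : Set.EqOn (iteratedDerivWithin m g (Icc 0 x)) (iteratedDeriv m g) (Icc 0 x) :=
      fun z hz => iDW_eq hg hs m hz
    have hd : DifferentiableOn ℝ (iteratedDeriv m g) (Ioo 0 x) :=
      ((contDiff_iteratedDeriv hg m).differentiable (by simp)).differentiableOn
    exact hd.congr (e.mono Ioo_subset_Icc_self)
  obtain ⟨ξ, hξ, hT⟩ := taylor_mean_remainder_lagrange (x₀ := 0) hx.ne
    (by rwa [uIcc_of_le hx.le]) (by rwa [uIcc_of_le hx.le, uIoo_of_le hx.le])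
  rw [uIcc_of_le hx.le] at hT
  rw [uIoo_of_le hx.le] at hξ
  refine ⟨ξ, hξ, ?_⟩
  have hTz : taylorWithinEval g m (Icc 0 x) 0 x = 0 := by
    rw [taylor_within_apply]
    apply Finset.sum_eq_zero
    intro i hi
    rw [iDW_eq hg hs i h0, hvan i (Nat.lt_succ_iff.mp (Finset.mem_range.mp hi))]
    simp
  rw [hTz, sub_zero] at hT
  rw [hT, iDW_eq hg hs (m+1) (Ioo_subset_Icc_self hξ), sub_zero]



lemma poly_bound {g : ℝ → ℝ} (hg : ContDiff ℝ ((⊤:ℕ∞) : WithTop ℕ∞) g) (m : ℕ)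
    (hvan : ∀ i < m, iteratedDeriv i g 0 = 0) :
    ∃ M > 0, ∀ t ∈ Icc (0:ℝ) 2, |g t| ≤ M * t^m := by
  obtain ⟨C, hC⟩ := (isCompact_Icc (a := (0:ℝ)) (b := 2)).exists_bound_of_continuousOn
    ((contDiff_iteratedDeriv hg m).continuous.continuousOn)
  have hC0 : 0 ≤ C := le_trans (norm_nonneg _) (hC 0 (by norm_num))
  refine ⟨C + 1, by positivity, ?_⟩
  intro t ht
  rcases Nat.eq_zero_or_pos m with rfl | hm
  · have := hC t ht
    simp only [pow_zero, mul_one]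
    calc |g t| = ‖iteratedDeriv 0 g t‖ := by simp [Real.norm_eq_abs]
    _ ≤ C := hC t ht
    _ ≤ C + 1 := by linarith
  · obtain ⟨k, rfl⟩ : ∃ k, m = k + 1 := ⟨m - 1, by omega⟩
    rcases eq_or_lt_of_le ht.1 with h0 | h0
    · rw [← h0]
      have : g 0 = 0 := hvan 0 (by omega)
      simp [this]
    · obtain ⟨ξ, hξ, hT⟩ := taylor_vanish hg k (fun i hi => hvan i (by omega)) h0
      have hξmem : ξ ∈ Icc (0:ℝ) 2 := ⟨hξ.1.le, le_trans hξ.2.le ht.2⟩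
      have h1 : |iteratedDeriv (k+1) g ξ| ≤ C := by
        have := hC ξ hξmem; rwa [Real.norm_eq_abs] at this
      have hfac : (1:ℝ) ≤ ((k+1)! : ℝ) := by exact_mod_cast Nat.one_le_iff_ne_zero.mpr (factorial_ne_zero _)
      have htpow : (0:ℝ) ≤ t^(k+1) := pow_nonneg ht.1 _
      rw [hT]
      rw [abs_div, abs_mul, abs_pow, abs_of_nonneg ht.1, abs_of_nonneg (by positivity : (0:ℝ) ≤ ((k+1)! : ℝ))]
      rw [div_le_iff₀ (by positivity)]
      calc |iteratedDeriv (k+1) g ξ| * t^(k+1) ≤ C * t^(k+1) :=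
        mul_le_mul_of_nonneg_right h1 htpow
      _ ≤ (C+1) * t^(k+1) * 1 := by nlinarith
      _ ≤ (C+1) * t^(k+1) * ((k+1)! : ℝ) := by
        apply mul_le_mul_of_nonneg_left hfac (by positivity)

lemma cos_bound {g : ℝ → ℝ} (hg : ContDiff ℝ ((⊤:ℕ∞) : WithTop ℕ∞) g) (hhalf : g (π/2) = 0) :
    ∃ M > 0, ∀ t ∈ Icc (0:ℝ) (π/2), |g t| ≤ M * Real.cos t := by
  obtain ⟨L, hL⟩ := (isCompact_Icc (a := (0:ℝ)) (b := 2)).exists_bound_of_continuousOn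
    ((contDiff_iteratedDeriv hg 1).continuous.continuousOn)
  have hπ2 : π/2 ≤ 2 := by linarith [Real.pi_le_four]
  have hL0 : 0 ≤ L := le_trans (norm_nonneg _) (hL 0 (by norm_num))
  refine ⟨(L+1) * (π/2), by positivity, ?_⟩
  intro t ht
  have hderiv : ∀ x ∈ uIcc t (π/2), HasDerivAt g (deriv g x) x := fun x _ =>
    ((hg.differentiable (by simp)) x).hasDerivAt
  have hint : IntervalIntegrable (deriv g) MeasureTheory.volume t (π/2) :=
    ((contDiff_iteratedDeriv hg 1).continuous.congr (by
      intro x; rw [iteratedDeriv_one])).intervalIntegrable _ _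
  have hFTC := intervalIntegral.integral_eq_sub_of_hasDerivAt hderiv hint
  have hIb : ‖∫ x in t..(π/2), deriv g x‖ ≤ (L+1) * |π/2 - t| := by
    apply intervalIntegral.norm_integral_le_of_norm_le_const
    intro x hx
    have hx' : x ∈ Icc (0:ℝ) 2 := by
      rcases le_total t (π/2) with hc | hc
      · rw [uIoc_of_le hc] at hx
        exact ⟨le_trans ht.1 hx.1.le, le_trans hx.2 hπ2⟩
      · rw [uIoc_of_ge hc] at hx
        exact ⟨le_trans (by linarith [Real.pi_pos]) hx.1.le, le_trans hx.2 (le_trans ht.2 hπ2)⟩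
    have := hL x hx'
    rw [iteratedDeriv_one] at this
    calc ‖deriv g x‖ ≤ L := this
    _ ≤ L + 1 := by linarith
  rw [hFTC, hhalf, zero_sub, norm_neg, Real.norm_eq_abs] at hIb
  have hcos : π/2 - t ≤ (π/2) * Real.cos t := by
    have h1 : 2/π * (π/2 - t) ≤ Real.sin (π/2 - t) :=
      Real.mul_le_sin (by linarith [ht.2]) (by linarith [ht.1])
    rw [Real.sin_pi_div_two_sub] at h1
    have hπ : (0:ℝ) < π := Real.pi_pos
    have h2 := mul_le_mul_of_nonneg_left h1 (by positivity : (0:ℝ) ≤ π/2)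
    have e : π/2 * (2/π * (π/2 - t)) = π/2 - t := by field_simp
    rw [e] at h2
    linarith
  have habs : |π/2 - t| = π/2 - t := abs_of_nonneg (by linarith [ht.2])
  rw [habs] at hIb
  calc |g t| ≤ (L+1) * (π/2 - t) := hIb
  _ ≤ (L+1) * ((π/2) * Real.cos t) := mul_le_mul_of_nonneg_left hcos (by linarith)
  _ = (L+1) * (π/2) * Real.cos t := by ring

lemma claimC {g : ℝ → ℝ} (hg : ContDiff ℝ ((⊤:ℕ∞) : WithTop ℕ∞) g) (m : ℕ)
    (hvan : ∀ i < m, iteratedDeriv i g 0 = 0)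
    (hev : ∀ t, g (-t) = g t) (hhalf : g (π/2) = 0) :
    ∃ A > 0, ∀ t ∈ Icc (-(π/2)) (π/2), |g t| ≤ A * |t|^m * Real.cos t := by
  obtain ⟨M1, hM1, hb1⟩ := poly_bound hg m hvan
  obtain ⟨M2, hM2, hb2⟩ := cos_bound hg hhalf
  refine ⟨2*M1 + M2, by positivity, ?_⟩
  have haux : ∀ t ∈ Icc (0:ℝ) (π/2), |g t| ≤ (2*M1 + M2) * t^m * Real.cos t := by
    intro t ht
    have hπ2 : π/2 ≤ 2 := by linarith [Real.pi_le_four]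
    have hcos0 : 0 ≤ Real.cos t :=
      Real.cos_nonneg_of_mem_Icc ⟨by linarith [ht.1, Real.pi_pos], ht.2⟩
    have htm : (0:ℝ) ≤ t^m := pow_nonneg ht.1 _
    rcases le_total t 1 with h1 | h1
    · have hc2 : (1:ℝ)/2 ≤ Real.cos t := by
        have := Real.one_sub_sq_div_two_le_cos (x := t)
        nlinarith [ht.1]
      calc |g t| ≤ M1 * t^m := hb1 t ⟨ht.1, le_trans ht.2 hπ2⟩
      _ = M1 * t^m * 1 := by ring
      _ ≤ M1 * t^m * (2 * Real.cos t) := by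
        apply mul_le_mul_of_nonneg_left (by linarith) (by positivity)
      _ = 2*M1 * t^m * Real.cos t := by ring
      _ ≤ (2*M1 + M2) * t^m * Real.cos t := by nlinarith [mul_nonneg htm hcos0]
    · have hpm : (1:ℝ) ≤ t^m := one_le_pow₀ h1
      calc |g t| ≤ M2 * Real.cos t := hb2 t ht
      _ = M2 * 1 * Real.cos t := by ring
      _ ≤ M2 * t^m * Real.cos t := by
        apply mul_le_mul_of_nonneg_right _ hcos0
        exact mul_le_mul_of_nonneg_left hpm (le_of_lt hM2)
      _ ≤ (2*M1 + M2) * t^m * Real.cos t := by nlinarith [mul_nonneg htm hcos0]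
  intro t ht
  rcases le_total 0 t with h0 | h0
  · rw [abs_of_nonneg h0]
    exact haux t ⟨h0, ht.2⟩
  · have hgt : g t = g (-t) := by rw [← hev t]
    rw [hgt, abs_of_nonpos h0]
    have h2 := haux (-t) ⟨by linarith, by linarith [ht.1]⟩
    rwa [Real.cos_neg] at h2



lemma deriv_vanish {f : ℝ → ℝ} (hf : ContDiff ℝ ((⊤:ℕ∞) : WithTop ℕ∞) f) (N : ℕ) (hN : 1 ≤ N)
    (hO : f =O[𝓝 (0:ℝ)] fun w : ℝ => w ^ N) : ∀ k, k < N → iteratedDeriv k f 0 = 0 := by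
  obtain ⟨c, hc, hOc⟩ := hO.exists_pos
  have hb := hOc.bound
  rw [Metric.eventually_nhds_iff] at hb
  obtain ⟨δ, hδ, hbδ⟩ := hb
  intro k
  induction k using Nat.strong_induction_on with
  | _ k IH =>
    intro hkN
    have hf0 : f 0 = 0 := by
      have h0 := hbδ (y := 0) (by simpa using hδ)
      rw [zero_pow (by omega : N ≠ 0)] at h0
      simp only [norm_zero, mul_zero] at h0
      simpa using le_antisymm h0 (norm_nonneg _)
    rcases Nat.eq_zero_or_pos k with rfl | hkpos
    · simpa using hf0
    obtain ⟨k', rfl⟩ : ∃ k', k = k'+1 := ⟨k-1, by omega⟩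
    have hfact : (0:ℝ) < ((k'+1)! : ℝ) := by exact_mod_cast Nat.factorial_pos (k'+1)
    have key : ∀ ε > 0, |iteratedDeriv (k'+1) f 0| ≤ ε := by
      intro ε hε
      have hcont : ContinuousAt (iteratedDeriv (k'+1) f) 0 :=
        (contDiff_iteratedDeriv hf (k'+1)).continuous.continuousAt
      rw [Metric.continuousAt_iff] at hcont
      obtain ⟨δ₂, hδ₂, hδ₂'⟩ := hcont (ε/2) (by positivity)
      have hden : (0:ℝ) < 2*c*((k'+1)! : ℝ) := by positivity
      set x : ℝ := min (δ/2) (min (δ₂/2) (min 1 (ε/(2*c*((k'+1)! : ℝ))))) with hxdef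
      have hx0 : 0 < x :=
        lt_min (by positivity) (lt_min (by positivity) (lt_min one_pos (div_pos hε hden)))
      have hx1 : x ≤ 1 :=
        le_trans (min_le_right _ _) (le_trans (min_le_right _ _) (min_le_left _ _))
      have hxδ : x < δ := lt_of_le_of_lt (min_le_left _ _) (by linarith)
      have hxδ₂ : x < δ₂ :=
        lt_of_le_of_lt (le_trans (min_le_right _ _) (min_le_left _ _)) (by linarith)
      have hxε : c * ((k'+1)! : ℝ) * x ≤ ε/2 := by
        have hxle : x ≤ ε/(2*c*((k'+1)! : ℝ)) :=
          le_trans (min_le_right _ _) (le_trans (min_le_right _ _) (min_le_right _ _))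
        rw [le_div_iff₀ hden] at hxle
        nlinarith
      obtain ⟨ξ, hξ, hT⟩ := taylor_vanish hf k' (fun i hi => IH i (by omega) (by omega)) hx0
      have hfxb : ‖f x‖ ≤ c * ‖x^N‖ := hbδ (by rw [Real.dist_eq, sub_zero, abs_of_pos hx0]; exact hxδ)
      have hxNk : x^N = x^(k'+1) * x^(N-(k'+1)) := by rw [← pow_add]; congr 1; omega
      have hfxb' : |f x| ≤ c * x^(k'+1) * x^(N-(k'+1)) := by
        rw [Real.norm_eq_abs, Real.norm_eq_abs, abs_of_pos (pow_pos hx0 N)] at hfxb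
        rw [hxNk] at hfxb
        calc |f x| ≤ c * (x^(k'+1) * x^(N-(k'+1))) := hfxb
        _ = c * x^(k'+1) * x^(N-(k'+1)) := by ring
      have hTT : iteratedDeriv (k'+1) f ξ = f x * ((k'+1)! : ℝ) / x^(k'+1) := by
        rw [hT]
        field_simp
      have hiD : |iteratedDeriv (k'+1) f ξ| ≤ c * ((k'+1)! : ℝ) * x^(N-(k'+1)) := by
        rw [hTT, abs_div, abs_mul, abs_of_pos (pow_pos hx0 _), abs_of_pos hfact]
        rw [div_le_iff₀ (pow_pos hx0 _)]
        calc |f x| * ((k'+1)! : ℝ) ≤ (c * x^(k'+1) * x^(N-(k'+1))) * ((k'+1)! : ℝ) :=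
          mul_le_mul_of_nonneg_right hfxb' (le_of_lt hfact)
        _ = c * ((k'+1)! : ℝ) * x^(N-(k'+1)) * x^(k'+1) := by ring
      have hxpow : x^(N-(k'+1)) ≤ x := by
        have h1 : 1 ≤ N - (k'+1) := by omega
        calc x^(N-(k'+1)) ≤ x^1 := pow_le_pow_of_le_one hx0.le hx1 h1
        _ = x := pow_one x
      have hiD2 : |iteratedDeriv (k'+1) f ξ| ≤ ε/2 := by
        calc |iteratedDeriv (k'+1) f ξ| ≤ c * ((k'+1)! : ℝ) * x^(N-(k'+1)) := hiD
        _ ≤ c * ((k'+1)! : ℝ) * x := mul_le_mul_of_nonneg_left hxpow (by positivity)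
        _ ≤ ε/2 := hxε
      have hclose : |iteratedDeriv (k'+1) f ξ - iteratedDeriv (k'+1) f 0| < ε/2 := by
        have hdist : dist ξ 0 < δ₂ := by
          rw [Real.dist_eq, sub_zero, abs_of_pos hξ.1]
          exact lt_trans hξ.2 hxδ₂
        have := hδ₂' hdist
        rwa [Real.dist_eq] at this
      calc |iteratedDeriv (k'+1) f 0|
          ≤ |iteratedDeriv (k'+1) f 0 - iteratedDeriv (k'+1) f ξ| + |iteratedDeriv (k'+1) f ξ| := by
            have := abs_sub_abs_le_abs_sub (iteratedDeriv (k'+1) f 0) (iteratedDeriv (k'+1) f ξ)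
            have h2 := abs_add_le (iteratedDeriv (k'+1) f 0 - iteratedDeriv (k'+1) f ξ) (iteratedDeriv (k'+1) f ξ)
            calc |iteratedDeriv (k'+1) f 0|
                = |(iteratedDeriv (k'+1) f 0 - iteratedDeriv (k'+1) f ξ) + iteratedDeriv (k'+1) f ξ| := by ring_nf
            _ ≤ _ := h2
      _ ≤ ε/2 + ε/2 := by
        have habs : |iteratedDeriv (k'+1) f 0 - iteratedDeriv (k'+1) f ξ| < ε/2 := by
          rwa [abs_sub_comm] at hclose
        linarith [hiD2]
      _ = ε := by ring
    rcases eq_or_ne (iteratedDeriv (k'+1) f 0) 0 with hz | hz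
    · exact hz
    · exfalso
      have h1 : 0 < |iteratedDeriv (k'+1) f 0| := abs_pos.mpr hz
      have h2 := key (|iteratedDeriv (k'+1) f 0|/2) (by positivity)
      linarith


end D2Div

open D2Div


set_option maxHeartbeats 2000000 in
/-- Divisibility estimate (key lemma for modified energies): let `n ≥ 1` and let
`f ∈ C^∞(ℝ)` with `f(ω) = O(ω^{2n})` as `ω → 0`, `f` even, and
`x ↦ f(x - π/2) - f(π/2)` odd.  Then there is `C > 0` such that on the resonant set
`w₁ + w₂ ≡ w₋₁ + w₋₂ (mod 2π)`,
`|D₂f(w)| ≤ C |D₂cos(w)| (w₁^{2n-2} + w₂^{2n-2} + w₋₁^{2n-2} + w₋₂^{2n-2})`. -/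
theorem D2_divisibility_estimate (n : ℕ) (hn : 1 ≤ n) (f : ℝ → ℝ)
    (hsmooth : ContDiff ℝ (⊤ : ℕ∞) f)
    (hO : f =O[𝓝 (0 : ℝ)] fun ω => ω ^ (2 * n))
    (heven : ∀ x, f (-x) = f x)
    (hodd : ∀ x, f (-x - Real.pi / 2) - f (Real.pi / 2)
      = -(f (x - Real.pi / 2) - f (Real.pi / 2))) :
    ∃ C > (0 : ℝ), ∀ w₁ w₂ wm₁ wm₂ : ℝ, (∃ j : ℤ, w₁ + w₂ - wm₁ - wm₂ = 2 * Real.pi * j) →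
      |f w₁ + f w₂ - f wm₁ - f wm₂|
        ≤ C * |Real.cos w₁ + Real.cos w₂ - Real.cos wm₁ - Real.cos wm₂|
            * (w₁ ^ (2 * n - 2) + w₂ ^ (2 * n - 2) + wm₁ ^ (2 * n - 2) + wm₂ ^ (2 * n - 2)) := by
  classical
  set m : ℕ := 2*n - 2 with hmdef
  have hmeven : Even m := ⟨n-1, by omega⟩
  have hf : ContDiff ℝ ((⊤:ℕ∞) : WithTop ℕ∞) f := hsmooth.of_le (by simp)
  have hdf : Differentiable ℝ f := hf.differentiable (by simp)
  -- functional equations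
  have hfe : ∀ x, f (x + π) = 2*(f (π/2)) - f x := by
    intro x
    have h1 := hodd (x + π/2)
    have e1 : -(x + π/2) - π/2 = -(x + π) := by ring
    have e2 : (x + π/2) - π/2 = x := by ring
    rw [e1, e2, heven (x + π)] at h1
    linarith
  have hfper : Function.Periodic f (2*π) := by
    intro x
    have h1 := hfe x
    have h2 := hfe (x + π)
    rw [show x + π + π = x + 2*π by ring] at h2
    linarith
  have hfint : ∀ (x : ℝ) (k : ℤ), f (x + 2*π*(k:ℝ)) = f x := by
    intro x k
    rw [show x + 2*π*(k:ℝ) = x + (k:ℝ)*(2*π) by ring]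
    exact (hfper.int_mul k) x
  -- first derivative
  have hhC : ContDiff ℝ ((⊤:ℕ∞) : WithTop ℕ∞) (deriv f) := (contDiff_infty_iff_deriv.mp hf).2
  have hdh : Differentiable ℝ (deriv f) := hhC.differentiable (by simp)
  have hodd' : ∀ x, deriv f (-x) = - deriv f x := by
    intro x
    have e : (fun y => f (-y)) = f := funext heven
    have h1 : deriv (fun y => f (-y)) x = deriv f x := by rw [e]
    rw [deriv_comp_neg] at h1
    linarith
  have hpi' : ∀ x, deriv f (x + π) = - deriv f x := by
    intro x
    have e : (fun y => f (y + π)) = (fun y => 2*(f (π/2)) - f y) := funext hfe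
    have h1 : deriv (fun y => f (y + π)) x = deriv (fun y => 2*(f (π/2)) - f y) x := by rw [e]
    rw [deriv_comp_add_const, deriv_const_sub] at h1
    exact h1
  have hrefl : ∀ x, deriv f (π - x) = deriv f x := by
    intro x
    have h1 : deriv f (π - x) = deriv f (-(x - π)) := by norm_num
    rw [h1, hodd' (x - π)]
    have h2 := hpi' (x - π)
    rw [show x - π + π = x by ring] at h2
    linarith
  have hper' : Function.Periodic (deriv f) (2*π) := by
    intro x
    have e : (fun y => f (y + 2*π)) = f := funext hfper
    have h1 : deriv (fun y => f (y + 2*π)) x = deriv f x := by rw [e]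
    rwa [deriv_comp_add_const] at h1
  have hint' : ∀ (x:ℝ) (k:ℤ), deriv f (x + 2*π*(k:ℝ)) = deriv f x := fun x k => by
    rw [show x + 2*π*(k:ℝ) = x + (k:ℝ)*(2*π) by ring]; exact (hper'.int_mul k) x
  -- deriv f is determined by sin
  have harc : ∀ x, deriv f x = deriv f (arcsin (Real.sin x)) := by
    intro x
    obtain ⟨y, hy, hdel⟩ : ∃ y : ℝ, x = y + 2*π*((round (x/(2*π)):ℤ):ℝ) ∧ del x = |y| :=
      ⟨x - 2*π*((round (x/(2*π)):ℤ):ℝ), by ring, rfl⟩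
    have hyπ : |y| ≤ π := by rw [← hdel]; exact del_le_pi x
    have hxy : deriv f x = deriv f y := by rw [hy, hint']
    have hsxy : Real.sin x = Real.sin y := by rw [hy, sin_shift]
    rw [hxy, hsxy]
    by_cases h1 : |y| ≤ π/2
    · rw [Real.arcsin_sin (by cases' abs_le.mp h1 with u v; linarith) (abs_le.mp h1).2]
    · push_neg at h1
      rcases abs_cases y with ⟨he, hpos⟩ | ⟨he, hneg⟩
      · rw [he] at h1
        have hyle : y ≤ π := by rw [he] at hyπ; exact hyπ
        rw [show Real.sin y = Real.sin (π - y) from (Real.sin_pi_sub y).symm,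
          Real.arcsin_sin (by linarith) (by linarith)]
        exact (hrefl y).symm
      · rw [he] at h1
        have hyge : -π ≤ y := by rw [he] at hyπ; linarith
        have h2 : Real.sin y = -Real.sin (π + y) := by
          have e : Real.sin (π + y) = Real.sin (-y) := by
            rw [← Real.sin_pi_sub (-y)]; ring_nf
          rw [e, Real.sin_neg]; ring
        rw [h2, Real.arcsin_neg, Real.arcsin_sin (by linarith) (by linarith)]
        rw [hodd' (π + y), show π + y = y + π by ring, hpi' y]
        ring
  -- second derivative
  have hgC : ContDiff ℝ ((⊤:ℕ∞) : WithTop ℕ∞) (deriv (deriv f)) := (contDiff_infty_iff_deriv.mp hhC).2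
  have hgeven : ∀ t, deriv (deriv f) (-t) = deriv (deriv f) t := by
    intro t
    have e : (fun y => deriv f (-y)) = (fun y => -(deriv f y)) := funext hodd'
    have h1 : deriv (fun y => deriv f (-y)) t = deriv (fun y => -(deriv f y)) t := by rw [e]
    rw [deriv_comp_neg, deriv.fun_neg] at h1
    linarith
  have hghalf : deriv (deriv f) (π/2) = 0 := by
    have e : (fun y => deriv f (π - y)) = deriv f := funext hrefl
    have h1 : deriv (fun y => deriv f (π - y)) (π/2) = deriv (deriv f) (π/2) := by rw [e]
    rw [deriv_comp_const_sub, show π - π/2 = π/2 by ring] at h1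
    linarith
  have hgvan : ∀ i < m, iteratedDeriv i (deriv (deriv f)) 0 = 0 := by
    intro i hi
    have hfi := deriv_vanish hf (2*n) (by omega) hO (i+2) (by omega)
    have e : iteratedDeriv i (deriv (deriv f)) 0 = iteratedDeriv (i+2) f 0 := by
      rw [show i+2 = i+1+1 from rfl, iteratedDeriv_succ', iteratedDeriv_succ']
    rw [e]
    exact hfi
  obtain ⟨A, hA, hAb⟩ := claimC hgC m hgvan hgeven hghalf
  -- inner estimate: difference of deriv f controlled by difference of sin
  have inner : ∀ x y : ℝ, |deriv f x - deriv f y|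
      ≤ A * ((del x)^m + (del y)^m) * |Real.sin x - Real.sin y| := by
    have inner_aux : ∀ x y : ℝ, arcsin (Real.sin y) ≤ arcsin (Real.sin x) →
        |deriv f x - deriv f y| ≤ A * ((del x)^m + (del y)^m) * |Real.sin x - Real.sin y| := by
      intro x y huv
      set u := arcsin (Real.sin x) with hudef
      set v := arcsin (Real.sin y) with hvdef
      have hu : u ∈ Icc (-(π/2)) (π/2) := Real.arcsin_mem_Icc _
      have hv : v ∈ Icc (-(π/2)) (π/2) := Real.arcsin_mem_Icc _
      have hsu : Real.sin u = Real.sin x := Real.sin_arcsin (Real.neg_one_le_sin x) (Real.sin_le_one x)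
      have hsv : Real.sin v = Real.sin y := Real.sin_arcsin (Real.neg_one_le_sin y) (Real.sin_le_one y)
      have hFTC : (∫ t in v..u, deriv (deriv f) t) = deriv f u - deriv f v :=
        intervalIntegral.integral_eq_sub_of_hasDerivAt (fun t _ => (hdh t).hasDerivAt)
          (hgC.continuous.intervalIntegrable _ _)
      set B := max |u| |v| with hBdef
      have hB0 : 0 ≤ B := le_trans (abs_nonneg u) (le_max_left _ _)
      have hmono : ∀ t ∈ Icc v u, |deriv (deriv f) t| ≤ A * B^m * Real.cos t := by
        intro t htm
        have ht2 : t ∈ Icc (-(π/2)) (π/2) := ⟨le_trans hv.1 htm.1, le_trans htm.2 hu.2⟩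
        have htB : |t| ≤ B := by
          have hvB : |v| ≤ B := le_max_right _ _
          have huB : |u| ≤ B := le_max_left _ _
          rw [abs_le]
          exact ⟨by linarith [neg_abs_le v, htm.1], by linarith [le_abs_self u, htm.2]⟩
        have h2 : |t|^m ≤ B^m := pow_le_pow_left₀ (abs_nonneg t) htB m
        have hcos0 : 0 ≤ Real.cos t := Real.cos_nonneg_of_mem_Icc ht2
        calc |deriv (deriv f) t| ≤ A * |t|^m * Real.cos t := hAb t ht2
        _ ≤ A * B^m * Real.cos t := by
          apply mul_le_mul_of_nonneg_right _ hcos0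
          exact mul_le_mul_of_nonneg_left h2 hA.le
      have hIb : |∫ t in v..u, deriv (deriv f) t| ≤ A * B^m * (Real.sin u - Real.sin v) := by
        calc |∫ t in v..u, deriv (deriv f) t| ≤ ∫ t in v..u, |deriv (deriv f) t| :=
          intervalIntegral.abs_integral_le_integral_abs huv
        _ ≤ ∫ t in v..u, A * B^m * Real.cos t := by
          apply intervalIntegral.integral_mono_on huv
            ((continuous_abs.comp hgC.continuous).intervalIntegrable _ _)
            ((continuous_const.mul Real.continuous_cos).intervalIntegrable _ _) hmono
        _ = A * B^m * (Real.sin u - Real.sin v) := by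
          rw [intervalIntegral.integral_const_mul, integral_cos]
      have hsin_mono : Real.sin v ≤ Real.sin u := by
        rcases eq_or_lt_of_le huv with he | hlt
        · rw [hudef, hvdef] at he ⊢
          rw [he]
        · exact (Real.strictMonoOn_sin hv hu hlt).le
      have hBpow : B^m ≤ (del x)^m + (del y)^m := by
        have h1 : |u| ≤ del x := abs_arcsin_sin_le x
        have h2 : |v| ≤ del y := abs_arcsin_sin_le y
        rcases max_cases |u| |v| with ⟨he, _⟩ | ⟨he, _⟩
        · calc B^m = |u|^m := by rw [hBdef, he]
          _ ≤ (del x)^m := pow_le_pow_left₀ (abs_nonneg _) h1 m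
          _ ≤ _ := le_add_of_nonneg_right (pow_nonneg (del_nonneg y) m)
        · calc B^m = |v|^m := by rw [hBdef, he]
          _ ≤ (del y)^m := pow_le_pow_left₀ (abs_nonneg _) h2 m
          _ ≤ _ := le_add_of_nonneg_left (pow_nonneg (del_nonneg x) m)
      have habs_sin : Real.sin u - Real.sin v = |Real.sin x - Real.sin y| := by
        rw [← hsu, ← hsv, abs_of_nonneg (by linarith)]
      calc |deriv f x - deriv f y| = |deriv f u - deriv f v| := by rw [harc x, harc y]
      _ = |∫ t in v..u, deriv (deriv f) t| := by rw [hFTC]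
      _ ≤ A * B^m * (Real.sin u - Real.sin v) := hIb
      _ = A * B^m * |Real.sin x - Real.sin y| := by rw [habs_sin]
      _ ≤ A * ((del x)^m + (del y)^m) * |Real.sin x - Real.sin y| := by
        apply mul_le_mul_of_nonneg_right _ (abs_nonneg _)
        exact mul_le_mul_of_nonneg_left hBpow hA.le
    intro x y
    rcases le_total (arcsin (Real.sin y)) (arcsin (Real.sin x)) with hc | hc
    · exact inner_aux x y hc
    · have h1 := inner_aux y x hc
      rw [abs_sub_comm (deriv f y) (deriv f x), abs_sub_comm (Real.sin y) (Real.sin x)] at h1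
      calc |deriv f x - deriv f y| ≤ A * ((del y)^m + (del x)^m) * |Real.sin x - Real.sin y| := h1
      _ = A * ((del x)^m + (del y)^m) * |Real.sin x - Real.sin y| := by ring
  refine ⟨2*A*8^m + 1, by positivity, ?_⟩
  intro w₁ w₂ wm₁ wm₂ hres
  obtain ⟨j, hj⟩ := hres
  have hj' : w₁ + w₂ - wm₁ - wm₂ = 2*(π*(j:ℝ)) := by rw [hj]; ring
  set s : ℝ := (wm₁ + wm₂)/2 with hsdef
  set D1 : ℝ := (w₁ - w₂)/2 + π*(j:ℝ) with hD1def
  set e2 : ℝ := (wm₁ - wm₂)/2 with he2def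
  have hw1 : w₁ = s + D1 := by rw [hsdef, hD1def]; linarith
  have hw2 : w₂ = s - D1 + 2*π*((j:ℤ):ℝ) := by rw [hsdef, hD1def]; push_cast; linarith
  have hwm1 : wm₁ = s + e2 := by rw [hsdef, he2def]; ring
  have hwm2 : wm₂ = s - e2 := by rw [hsdef, he2def]; ring
  obtain ⟨r1, y1, hy1, hdel1⟩ : ∃ (r1:ℤ) (y1:ℝ), D1 = y1 + 2*π*(r1:ℝ) ∧ del D1 = |y1| :=
    ⟨round (D1/(2*π)), D1 - 2*π*((round (D1/(2*π)):ℤ):ℝ), by ring, rfl⟩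
  obtain ⟨r2, y2, hy2, hdel2⟩ : ∃ (r2:ℤ) (y2:ℝ), e2 = y2 + 2*π*(r2:ℝ) ∧ del e2 = |y2| :=
    ⟨round (e2/(2*π)), e2 - 2*π*((round (e2/(2*π)):ℤ):ℝ), by ring, rfl⟩
  set a : ℝ := |y1| with hadef
  set b : ℝ := |y2| with hbdef
  have ha0 : 0 ≤ a := abs_nonneg y1
  have hb0 : 0 ≤ b := abs_nonneg y2
  have haπ : a ≤ π := by rw [← hdel1]; exact del_le_pi D1
  have hbπ : b ≤ π := by rw [← hdel2]; exact del_le_pi e2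
  have hfw : f w₁ + f w₂ = f (s + a) + f (s - a) := by
    have h1 : f w₁ = f (s + y1) := by
      rw [hw1, hy1, show s + (y1 + 2*π*(r1:ℝ)) = (s + y1) + 2*π*(r1:ℝ) by ring, hfint]
    have h2 : f w₂ = f (s - y1) := by
      rw [hw2, hy1, show s - (y1 + 2*π*(r1:ℝ)) + 2*π*((j:ℤ):ℝ)
        = (s - y1) + 2*π*(((j - r1 : ℤ)):ℝ) by push_cast; ring, hfint]
    rcases abs_cases y1 with ⟨he, _⟩ | ⟨he, _⟩
    · rw [hadef, he, h1, h2]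
    · rw [hadef, he, h1, h2, show s + -y1 = s - y1 by ring, show s - -y1 = s + y1 by ring]
      ring
  have hfwm : f wm₁ + f wm₂ = f (s + b) + f (s - b) := by
    have h1 : f wm₁ = f (s + y2) := by
      rw [hwm1, hy2, show s + (y2 + 2*π*(r2:ℝ)) = (s + y2) + 2*π*(r2:ℝ) by ring, hfint]
    have h2 : f wm₂ = f (s - y2) := by
      rw [hwm2, hy2, show s - (y2 + 2*π*(r2:ℝ)) = (s - y2) + 2*π*((-r2:ℤ):ℝ) by push_cast; ring, hfint]
    rcases abs_cases y2 with ⟨he, _⟩ | ⟨he, _⟩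
    · rw [hbdef, he, h1, h2]
    · rw [hbdef, he, h1, h2, show s + -y2 = s - y2 by ring, show s - -y2 = s + y2 by ring]
      ring
  have hcw : Real.cos w₁ + Real.cos w₂ = 2 * Real.cos s * Real.cos a := by
    have h1 : Real.cos w₁ = Real.cos (s + y1) := by
      rw [hw1, hy1, show s + (y1 + 2*π*(r1:ℝ)) = (s + y1) + 2*π*(r1:ℝ) by ring, cos_shift]
    have h2 : Real.cos w₂ = Real.cos (s - y1) := by
      rw [hw2, hy1, show s - (y1 + 2*π*(r1:ℝ)) + 2*π*((j:ℤ):ℝ)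
        = (s - y1) + 2*π*(((j - r1 : ℤ)):ℝ) by push_cast; ring, cos_shift]
    have hca : Real.cos a = Real.cos y1 := by
      rcases abs_cases y1 with ⟨he, _⟩ | ⟨he, _⟩
      · rw [hadef, he]
      · rw [hadef, he, Real.cos_neg]
    rw [h1, h2, hca, Real.cos_add, Real.cos_sub]
    ring
  have hcwm : Real.cos wm₁ + Real.cos wm₂ = 2 * Real.cos s * Real.cos b := by
    have h1 : Real.cos wm₁ = Real.cos (s + y2) := by
      rw [hwm1, hy2, show s + (y2 + 2*π*(r2:ℝ)) = (s + y2) + 2*π*(r2:ℝ) by ring, cos_shift]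
    have h2 : Real.cos wm₂ = Real.cos (s - y2) := by
      rw [hwm2, hy2, show s - (y2 + 2*π*(r2:ℝ)) = (s - y2) + 2*π*((-r2:ℤ):ℝ) by push_cast; ring, cos_shift]
    have hcb : Real.cos b = Real.cos y2 := by
      rcases abs_cases y2 with ⟨he, _⟩ | ⟨he, _⟩
      · rw [hbdef, he]
      · rw [hbdef, he, Real.cos_neg]
    rw [h1, h2, hcb, Real.cos_add, Real.cos_sub]
    ring
  have hdw : (del (s+a))^m + (del (s-a))^m = (del w₁)^m + (del w₂)^m := by
    have h1 : del (s + y1) = del w₁ := by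
      rw [hw1, hy1, show s + (y1 + 2*π*(r1:ℝ)) = (s + y1) + 2*π*(r1:ℝ) by ring, del_shift]
    have h2 : del (s - y1) = del w₂ := by
      rw [hw2, hy1, show s - (y1 + 2*π*(r1:ℝ)) + 2*π*((j:ℤ):ℝ)
        = (s - y1) + 2*π*(((j - r1 : ℤ)):ℝ) by push_cast; ring, del_shift]
    rcases abs_cases y1 with ⟨he, _⟩ | ⟨he, _⟩
    · rw [hadef, he, h1, h2]
    · rw [hadef, he, show s + -y1 = s - y1 by ring, show s - -y1 = s + y1 by ring, h1, h2]
      ring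
  have hdwm : (del (s+b))^m + (del (s-b))^m = (del wm₁)^m + (del wm₂)^m := by
    have h1 : del (s + y2) = del wm₁ := by
      rw [hwm1, hy2, show s + (y2 + 2*π*(r2:ℝ)) = (s + y2) + 2*π*(r2:ℝ) by ring, del_shift]
    have h2 : del (s - y2) = del wm₂ := by
      rw [hwm2, hy2, show s - (y2 + 2*π*(r2:ℝ)) = (s - y2) + 2*π*((-r2:ℤ):ℝ) by push_cast; ring, del_shift]
    rcases abs_cases y2 with ⟨he, _⟩ | ⟨he, _⟩
    · rw [hbdef, he, h1, h2]
    · rw [hbdef, he, show s + -y2 = s - y2 by ring, show s - -y2 = s + y2 by ring, h1, h2]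
      ring
  set W4 : ℝ := (del w₁)^m + (del w₂)^m + (del wm₁)^m + (del wm₂)^m with hW4def
  have hW40 : 0 ≤ W4 := by
    rw [hW4def]
    have := pow_nonneg (del_nonneg w₁) m
    have := pow_nonneg (del_nonneg w₂) m
    have := pow_nonneg (del_nonneg wm₁) m
    have := pow_nonneg (del_nonneg wm₂) m
    linarith
  have hEsum : (del (s+a))^m + (del (s-a))^m + (del (s+b))^m + (del (s-b))^m = W4 := by
    rw [hW4def]; linarith [hdw, hdwm]
  -- pointwise estimate on the integration interval
  have hptw : ∀ d ∈ Icc (min a b) (max a b),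
      |deriv f (s+d) - deriv f (s-d)| ≤ (4*A*8^m*W4) * (|Real.cos s| * Real.sin d) := by
    intro d hd
    have hd0 : 0 ≤ d := le_trans (le_min ha0 hb0) hd.1
    have hdπ : d ≤ π := le_trans hd.2 (max_le haπ hbπ)
    have hsind : 0 ≤ Real.sin d := Real.sin_nonneg_of_nonneg_of_le_pi hd0 hdπ
    have habπ : |a - b| ≤ π := by
      rw [abs_le]; constructor <;> linarith
    have hab_del : del (a - b) = |a - b| := del_eq_abs habπ
    have haminb1 : |a - b| ≤ del (s+a) + del (s+b) := by
      have h3 : del ((s+a) - (s+b)) ≤ del (s+a) + del (s+b) := del_sub _ _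
      rw [show (s+a)-(s+b) = a - b by ring, hab_del] at h3
      exact h3
    have haminb2 : |a - b| ≤ del (s-a) + del (s-b) := by
      have h3 : del ((s-b) - (s-a)) ≤ del (s-b) + del (s-a) := del_sub _ _
      rw [show (s-b)-(s-a) = a - b by ring, hab_del] at h3
      linarith
    have hdmd : |d - a| ≤ |a - b| := by
      rcases le_total a b with hc | hc
      · rw [min_eq_left hc, max_eq_right hc] at hd
        rw [abs_of_nonneg (by linarith [hd.1]), abs_of_nonpos (by linarith : a - b ≤ 0)]
        linarith [hd.2]
      · rw [min_eq_right hc, max_eq_left hc] at hd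
        rw [abs_of_nonpos (by linarith [hd.2] : d - a ≤ 0), abs_of_nonneg (by linarith : (0:ℝ) ≤ a - b)]
        linarith [hd.1]
    have hp1 : 0 ≤ del (s+a) := del_nonneg _
    have hp2 : 0 ≤ del (s-a) := del_nonneg _
    have hp3 : 0 ≤ del (s+b) := del_nonneg _
    have hp4 : 0 ≤ del (s-b) := del_nonneg _
    set E : ℝ := del (s+a) + del (s-a) + del (s+b) + del (s-b) with hEdef
    have hE0 : 0 ≤ E := by rw [hEdef]; linarith
    have hc1 : del (s+d) ≤ 2*E := by
      calc del (s+d) ≤ del (s+a) + |(s+d) - (s+a)| := del_dist _ _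
      _ = del (s+a) + |d - a| := by rw [show (s+d)-(s+a) = d - a by ring]
      _ ≤ del (s+a) + |a - b| := by linarith [hdmd]
      _ ≤ 2*E := by rw [hEdef]; linarith [haminb1]
    have hc2 : del (s-d) ≤ 2*E := by
      calc del (s-d) ≤ del (s-a) + |(s-d) - (s-a)| := del_dist _ _
      _ = del (s-a) + |d - a| := by rw [show (s-d)-(s-a) = a - d by ring, abs_sub_comm]
      _ ≤ del (s-a) + |a - b| := by linarith [hdmd]
      _ ≤ 2*E := by rw [hEdef]; linarith [haminb2]
    have hE4 : E^m ≤ 4^m * ((del (s+a))^m + (del (s-a))^m + (del (s+b))^m + (del (s-b))^m) := by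
      set M : ℝ := max (max (del (s+a)) (del (s-a))) (max (del (s+b)) (del (s-b))) with hMdef
      have hM0 : 0 ≤ M := le_trans hp1 (le_trans (le_max_left _ _) (le_max_left _ _))
      have hEM : E ≤ 4*M := by
        have q1 : del (s+a) ≤ M := le_trans (le_max_left _ _) (le_max_left _ _)
        have q2 : del (s-a) ≤ M := le_trans (le_max_right _ _) (le_max_left _ _)
        have q3 : del (s+b) ≤ M := le_trans (le_max_left _ _) (le_max_right _ _)
        have q4 : del (s-b) ≤ M := le_trans (le_max_right _ _) (le_max_right _ _)
        rw [hEdef]; linarith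
      have h5 : E^m ≤ (4*M)^m := pow_le_pow_left₀ hE0 hEM m
      have hq1 := pow_nonneg hp1 m
      have hq2 := pow_nonneg hp2 m
      have hq3 := pow_nonneg hp3 m
      have hq4 := pow_nonneg hp4 m
      have h6 : M^m ≤ (del (s+a))^m + (del (s-a))^m + (del (s+b))^m + (del (s-b))^m := by
        rcases max_cases (max (del (s+a)) (del (s-a))) (max (del (s+b)) (del (s-b))) with ⟨hM1, _⟩ | ⟨hM1, _⟩
        · rcases max_cases (del (s+a)) (del (s-a)) with ⟨hM2, _⟩ | ⟨hM2, _⟩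
          · rw [hMdef, hM1, hM2]; linarith
          · rw [hMdef, hM1, hM2]; linarith
        · rcases max_cases (del (s+b)) (del (s-b)) with ⟨hM2, _⟩ | ⟨hM2, _⟩
          · rw [hMdef, hM1, hM2]; linarith
          · rw [hMdef, hM1, hM2]; linarith
      calc E^m ≤ (4*M)^m := h5
      _ = 4^m * M^m := mul_pow 4 M m
      _ ≤ 4^m * ((del (s+a))^m + (del (s-a))^m + (del (s+b))^m + (del (s-b))^m) :=
        mul_le_mul_of_nonneg_left h6 (by positivity)
    have hsum : (del (s+d))^m + (del (s-d))^m ≤ 2 * (2*E)^m := by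
      have u1 := pow_le_pow_left₀ (del_nonneg (s+d)) hc1 m
      have u2 := pow_le_pow_left₀ (del_nonneg (s-d)) hc2 m
      linarith
    have hsinabs : |Real.sin (s+d) - Real.sin (s-d)| = 2 * |Real.cos s| * Real.sin d := by
      rw [show Real.sin (s+d) - Real.sin (s-d) = 2*(Real.cos s * Real.sin d) by
        rw [Real.sin_add, Real.sin_sub]; ring]
      rw [abs_mul, abs_mul, abs_two, abs_of_nonneg hsind]
      ring
    have h9 : (2*E)^m ≤ 8^m * W4 := by
      calc (2*E)^m = 2^m * E^m := mul_pow 2 E m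
      _ ≤ 2^m * (4^m * ((del (s+a))^m + (del (s-a))^m + (del (s+b))^m + (del (s-b))^m)) :=
        mul_le_mul_of_nonneg_left hE4 (by positivity)
      _ = 8^m * W4 := by rw [hEsum, ← mul_assoc, ← mul_pow]; norm_num
    have hcs : 0 ≤ |Real.cos s| * Real.sin d := mul_nonneg (abs_nonneg _) hsind
    calc |deriv f (s+d) - deriv f (s-d)|
        ≤ A * ((del (s+d))^m + (del (s-d))^m) * |Real.sin (s+d) - Real.sin (s-d)| :=
      inner (s+d) (s-d)
    _ = A * ((del (s+d))^m + (del (s-d))^m) * (2 * |Real.cos s| * Real.sin d) := by rw [hsinabs]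
    _ ≤ A * (2*(2*E)^m) * (2 * |Real.cos s| * Real.sin d) := by
      apply mul_le_mul_of_nonneg_right _ (by positivity)
      exact mul_le_mul_of_nonneg_left hsum hA.le
    _ = (4*A*(2*E)^m) * (|Real.cos s| * Real.sin d) := by ring
    _ ≤ (4*A*8^m*W4) * (|Real.cos s| * Real.sin d) := by
      apply mul_le_mul_of_nonneg_right _ hcs
      calc 4*A*(2*E)^m ≤ 4*A*(8^m*W4) :=
        mul_le_mul_of_nonneg_left h9 (by positivity)
      _ = 4*A*8^m*W4 := by ring
  -- FTC in the d-variable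
  have hΨ : ∀ d : ℝ, HasDerivAt (fun q => f (s+q) + f (s-q)) (deriv f (s+d) - deriv f (s-d)) d := by
    intro d
    have H1 : HasDerivAt (fun q : ℝ => f (s + q)) (deriv f (s+d)) d := by
      have h0 := ((hdf (s+d)).hasDerivAt).comp d ((hasDerivAt_id d).const_add s)
      simpa [Function.comp_def] using h0
    have H2 : HasDerivAt (fun q : ℝ => f (s - q)) (-(deriv f (s-d))) d := by
      have h0 := ((hdf (s-d)).hasDerivAt).comp d ((hasDerivAt_id d).const_sub s)
      simpa [Function.comp_def] using h0
    have h3 := H1.add H2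
    exact h3.congr_deriv (sub_eq_add_neg _ _).symm
  have hcontΨ' : Continuous (fun d : ℝ => deriv f (s+d) - deriv f (s-d)) :=
    ((hhC.continuous.comp (continuous_const.add continuous_id)).sub
      (hhC.continuous.comp (continuous_const.sub continuous_id)))
  have hFTC2 : (f (s+a) + f (s-a)) - (f (s+b) + f (s-b))
      = ∫ d in b..a, (deriv f (s+d) - deriv f (s-d)) :=
    (intervalIntegral.integral_eq_sub_of_hasDerivAt (fun d _ => hΨ d)
      (hcontΨ'.intervalIntegrable _ _)).symm
  have hKnn : 0 ≤ 4*A*8^m*W4 :=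
    mul_nonneg (mul_nonneg (mul_nonneg (by norm_num) hA.le) (by positivity)) hW40
  have hsinc : Continuous (fun d : ℝ => (4*A*8^m*W4) * (|Real.cos s| * Real.sin d)) := by
    exact continuous_const.mul (continuous_const.mul Real.continuous_sin)
  have hmain : |(f (s+a) + f (s-a)) - (f (s+b) + f (s-b))|
      ≤ (4*A*8^m*W4) * (|Real.cos s| * |Real.cos a - Real.cos b|) := by
    rw [hFTC2]
    rcases le_total b a with hba | hba
    · have hmm : Icc b a = Icc (min a b) (max a b) := by
        rw [min_eq_right hba, max_eq_left hba]
      calc |∫ d in b..a, (deriv f (s+d) - deriv f (s-d))|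
          ≤ ∫ d in b..a, |deriv f (s+d) - deriv f (s-d)| :=
        intervalIntegral.abs_integral_le_integral_abs hba
      _ ≤ ∫ d in b..a, (4*A*8^m*W4) * (|Real.cos s| * Real.sin d) := by
        apply intervalIntegral.integral_mono_on hba
          ((continuous_abs.comp hcontΨ').intervalIntegrable _ _)
          (hsinc.intervalIntegrable _ _)
        intro d hd
        exact hptw d (by rw [← hmm]; exact hd)
      _ = (4*A*8^m*W4) * (|Real.cos s| * (Real.cos b - Real.cos a)) := by
        rw [intervalIntegral.integral_const_mul, intervalIntegral.integral_const_mul, integral_sin]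
      _ ≤ (4*A*8^m*W4) * (|Real.cos s| * |Real.cos a - Real.cos b|) := by
        apply mul_le_mul_of_nonneg_left _ hKnn
        apply mul_le_mul_of_nonneg_left _ (abs_nonneg _)
        rw [abs_sub_comm]
        exact le_abs_self _
    · have hmm : Icc a b = Icc (min a b) (max a b) := by
        rw [min_eq_left hba, max_eq_right hba]
      rw [intervalIntegral.integral_symm a b, abs_neg]
      calc |∫ d in a..b, (deriv f (s+d) - deriv f (s-d))|
          ≤ ∫ d in a..b, |deriv f (s+d) - deriv f (s-d)| :=
        intervalIntegral.abs_integral_le_integral_abs hba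
      _ ≤ ∫ d in a..b, (4*A*8^m*W4) * (|Real.cos s| * Real.sin d) := by
        apply intervalIntegral.integral_mono_on hba
          ((continuous_abs.comp hcontΨ').intervalIntegrable _ _)
          (hsinc.intervalIntegrable _ _)
        intro d hd
        exact hptw d (by rw [← hmm]; exact hd)
      _ = (4*A*8^m*W4) * (|Real.cos s| * (Real.cos a - Real.cos b)) := by
        rw [intervalIntegral.integral_const_mul, intervalIntegral.integral_const_mul, integral_sin]
      _ ≤ (4*A*8^m*W4) * (|Real.cos s| * |Real.cos a - Real.cos b|) := by
        apply mul_le_mul_of_nonneg_left _ hKnn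
        apply mul_le_mul_of_nonneg_left _ (abs_nonneg _)
        exact le_abs_self _
  have hD2f : f w₁ + f w₂ - f wm₁ - f wm₂ = (f (s+a) + f (s-a)) - (f (s+b) + f (s-b)) := by
    linarith [hfw, hfwm]
  have hD2c : Real.cos w₁ + Real.cos w₂ - Real.cos wm₁ - Real.cos wm₂
      = 2 * Real.cos s * (Real.cos a - Real.cos b) := by linarith [hcw, hcwm]
  have habs2 : |Real.cos w₁ + Real.cos w₂ - Real.cos wm₁ - Real.cos wm₂|
      = 2 * (|Real.cos s| * |Real.cos a - Real.cos b|) := by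
    rw [hD2c, show 2*Real.cos s*(Real.cos a - Real.cos b)
      = 2*(Real.cos s*(Real.cos a - Real.cos b)) by ring, abs_mul, abs_mul, abs_two]
  have hW4W : W4 ≤ w₁^m + w₂^m + wm₁^m + wm₂^m := by
    have hd : ∀ x : ℝ, (del x)^m ≤ x^m := by
      intro x
      calc (del x)^m ≤ |x|^m := pow_le_pow_left₀ (del_nonneg x) (del_le_abs x) m
      _ = x^m := hmeven.pow_abs x
    rw [hW4def]
    linarith [hd w₁, hd w₂, hd wm₁, hd wm₂]
  rw [hD2f]
  calc |(f (s+a) + f (s-a)) - (f (s+b) + f (s-b))|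
      ≤ (4*A*8^m*W4) * (|Real.cos s| * |Real.cos a - Real.cos b|) := hmain
  _ = (2*A*8^m) * (2 * (|Real.cos s| * |Real.cos a - Real.cos b|)) * W4 := by ring
  _ = (2*A*8^m) * |Real.cos w₁ + Real.cos w₂ - Real.cos wm₁ - Real.cos wm₂| * W4 := by
    rw [habs2]
  _ ≤ (2*A*8^m + 1) * |Real.cos w₁ + Real.cos w₂ - Real.cos wm₁ - Real.cos wm₂|
      * (w₁^m + w₂^m + wm₁^m + wm₂^m) := by
    have hf1 : (2*A*8^m) * |Real.cos w₁ + Real.cos w₂ - Real.cos wm₁ - Real.cos wm₂|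
        ≤ (2*A*8^m + 1) * |Real.cos w₁ + Real.cos w₂ - Real.cos wm₁ - Real.cos wm₂| :=
      mul_le_mul_of_nonneg_right (by linarith) (abs_nonneg _)
    have hf2 : 0 ≤ (2*A*8^m) * |Real.cos w₁ + Real.cos w₂ - Real.cos wm₁ - Real.cos wm₂| :=
      mul_nonneg (mul_nonneg (by linarith [hA.le] : (0:ℝ) ≤ 2*A) (by positivity)) (abs_nonneg _)
    have h8 : (0:ℝ) ≤ (8:ℝ)^m := by positivity
    have hnn : (0:ℝ) ≤ 2*A*8^m + 1 := by nlinarith [hA.le]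
    exact mul_le_mul hf1 hW4W hW40 (mul_nonneg hnn (abs_nonneg _))
end

section
/- Properties of the modified-energy symbol: for n ≥ 1, the trigonometric polynomial f_n(ω) = 1 − cos(ω) Σ_{k=0}^{n−1} (C(2k,k)/4^k)(sin ω)^{2k} satisfies: (i) f_n is even and f_n − 1 is odd about π/2 (i.e. x ↦ f_n(x − π/2) − f_n(π/2) is odd with f_n(π/2) = 1); (ii) f_n(ω) ~ (C(2n,n)/4^n) ω^{2n} as ω → 0; (iii) there exists α > 0 such that α ω^{2n} ≤ f_n(ω) ≤ α^{−1} ω^{2n} for all ω ∈ (−π, π). -/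
/-!
The derivative telescopes: since `(2k+2) a_{k+1} = (2k+1) a_k` for `a_k = C(2k,k)/4^k`, one gets
`f_{n+1}' = (2n+1) a_n sin^{2n+1}`. Comparing derivatives on `[0, π]` then gives
`a_{n+1} sin^{2n+2} ω ≤ f_{n+1}(ω) ≤ a_{n+1} ω^{2n+2}`, using `cos ≤ 1` and `sin ω ≤ ω`.
Both bounds are `~ a_{n+1} ω^{2n+2}` at `0`, and Jordan's inequality `sin ω ≥ 2ω/π` on
`[0, π/2]` together with `f ≥ 1` where `cos ≤ 0` turns the lower bound into
`a_{n+1} (ω/π)^{2n+2} ≤ f_{n+1}(ω)`.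
-/

open scoped Topology

/-- The modified-energy symbol
`f_n(ω) = 1 - cos ω · Σ_{k=0}^{n-1} (C(2k,k)/4^k)(sin ω)^{2k}`. -/
noncomputable def modSymbol (n : ℕ) (ω : ℝ) : ℝ :=
  1 - Real.cos ω * ∑ k ∈ Finset.range n, ((Nat.choose (2 * k) k : ℝ) / 4 ^ k) * Real.sin ω ^ (2 * k)

open Real Set Asymptotics

noncomputable def centralBinomRatio (k : ℕ) : ℝ := ((2 * k).choose k : ℝ) / 4 ^ k

lemma centralBinomRatio_pos (k : ℕ) : 0 < centralBinomRatio k := by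
  have : 0 < (2 * k).choose k := Nat.choose_pos (by omega)
  unfold centralBinomRatio
  positivity

lemma centralBinomRatio_le_one (k : ℕ) : centralBinomRatio k ≤ 1 := by
  rw [centralBinomRatio, div_le_one (by positivity), ← Nat.centralBinom_eq_two_mul_choose]
  exact_mod_cast Nat.centralBinom_le_four_pow k

lemma centralBinomRatio_succ (k : ℕ) :
    (2 * k + 2) * centralBinomRatio (k + 1) = (2 * k + 1) * centralBinomRatio k := by
  have h : ((k + 1 : ℕ) : ℝ) * (k + 1).centralBinom = 2 * (2 * k + 1) * k.centralBinom := by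
    exact_mod_cast Nat.succ_mul_centralBinom_succ k
  simp only [centralBinomRatio, ← Nat.centralBinom_eq_two_mul_choose]
  rw [pow_succ]
  field_simp
  push_cast at h
  linear_combination 2 * h

lemma hasDerivAt_centralBinomRatio_mul_pow {u : ℝ → ℝ} {u' x : ℝ} (hu : HasDerivAt u u' x)
    (n : ℕ) :
    HasDerivAt (fun y => centralBinomRatio (n + 1) * u y ^ (2 * (n + 1)))
      ((2 * n + 1) * centralBinomRatio n * u x ^ (2 * n + 1) * u') x := by
  refine ((hu.pow (2 * (n + 1))).const_mul (centralBinomRatio (n + 1))).congr_deriv ?_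
  rw [← centralBinomRatio_succ, show 2 * (n + 1) - 1 = 2 * n + 1 by omega]
  push_cast
  ring

lemma modSymbol_zero_left (ω : ℝ) : modSymbol 0 ω = 1 := by
  simp [modSymbol]

lemma modSymbol_succ (n : ℕ) (ω : ℝ) :
    modSymbol (n + 1) ω = modSymbol n ω - centralBinomRatio n * sin ω ^ (2 * n) * cos ω := by
  simp only [modSymbol, Finset.sum_range_succ, centralBinomRatio]
  ring

lemma modSymbol_succ_zero (n : ℕ) : modSymbol (n + 1) 0 = 0 := by
  simp [modSymbol, Finset.sum_range_succ']

lemma modSymbol_neg (n : ℕ) (ω : ℝ) : modSymbol n (-ω) = modSymbol n ω := by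
  simp only [modSymbol, cos_neg, sin_neg, (even_two_mul _).neg_pow]

lemma modSymbol_abs (n : ℕ) (ω : ℝ) : modSymbol n |ω| = modSymbol n ω := by
  rcases abs_choice ω with h | h <;> rw [h]
  exact modSymbol_neg n ω

lemma modSymbol_pi_div_two (n : ℕ) : modSymbol n (π / 2) = 1 := by
  simp [modSymbol]

lemma modSymbol_pi_div_two_add_add_modSymbol_pi_div_two_sub (n : ℕ) (x : ℝ) :
    modSymbol n (π / 2 + x) + modSymbol n (π / 2 - x) = 2 := by
  rw [add_comm (π / 2)]
  simp only [modSymbol, cos_add_pi_div_two, sin_add_pi_div_two, cos_pi_div_two_sub,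
    sin_pi_div_two_sub]
  ring

lemma one_le_modSymbol {n : ℕ} {ω : ℝ} (hω : cos ω ≤ 0) : 1 ≤ modSymbol n ω := by
  have hsum : 0 ≤ ∑ k ∈ Finset.range n, ((2 * k).choose k : ℝ) / 4 ^ k * sin ω ^ (2 * k) :=
    Finset.sum_nonneg fun k _ =>
      mul_nonneg (centralBinomRatio_pos k).le ((even_two_mul k).pow_nonneg _)
  rw [modSymbol]
  nlinarith

lemma hasDerivAt_modSymbol_succ (n : ℕ) (x : ℝ) :
    HasDerivAt (modSymbol (n + 1)) ((2 * n + 1) * centralBinomRatio n * sin x ^ (2 * n + 1)) x := by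
  induction n with
  | zero =>
    rw [funext (modSymbol_succ 0)]
    simpa [modSymbol_zero_left, centralBinomRatio] using (hasDerivAt_cos x).const_sub 1
  | succ n ih =>
    rw [funext (modSymbol_succ (n + 1))]
    have hterm := (hasDerivAt_centralBinomRatio_mul_pow (hasDerivAt_sin x) n).mul (hasDerivAt_cos x)
    refine (ih.sub hterm).congr_deriv ?_
    push_cast
    linear_combination (-(2 * n + 1) * centralBinomRatio n * sin x ^ (2 * n + 1)) *
      sin_sq_add_cos_sq x - sin x ^ (2 * n + 3) * centralBinomRatio_succ n

lemma image_le_of_hasDerivAt_le {f g f' g' : ℝ → ℝ} {a b : ℝ}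
    (hf : ∀ x, HasDerivAt f (f' x) x) (hg : ∀ x, HasDerivAt g (g' x) x) (ha : f a ≤ g a)
    (hle : ∀ x ∈ Ico a b, f' x ≤ g' x) : ∀ ⦃x⦄, x ∈ Icc a b → f x ≤ g x :=
  image_le_of_deriv_right_le_deriv_boundary
    (fun x _ => (hf x).continuousAt.continuousWithinAt) (fun x _ => (hf x).hasDerivWithinAt) ha
    (fun x _ => (hg x).continuousAt.continuousWithinAt) (fun x _ => (hg x).hasDerivWithinAt) hle

lemma modSymbol_succ_le_of_nonneg (n : ℕ) {ω : ℝ} (hω : 0 ≤ ω) :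
    modSymbol (n + 1) ω ≤ centralBinomRatio (n + 1) * ω ^ (2 * (n + 1)) := by
  refine image_le_of_hasDerivAt_le (hasDerivAt_modSymbol_succ n)
    (fun y => hasDerivAt_centralBinomRatio_mul_pow (hasDerivAt_id' y) n) ?_ (fun y hy => ?_)
    ⟨hω, le_rfl⟩
  · simp [modSymbol_succ_zero]
  · rw [mul_one]
    exact mul_le_mul_of_nonneg_left ((Odd.pow_le_pow ⟨n, rfl⟩).2 (sin_le hy.1))
      (mul_nonneg (by positivity) (centralBinomRatio_pos n).le)

lemma modSymbol_succ_le (n : ℕ) (ω : ℝ) :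
    modSymbol (n + 1) ω ≤ centralBinomRatio (n + 1) * ω ^ (2 * (n + 1)) := by
  rcases le_total 0 ω with hω | hω
  · exact modSymbol_succ_le_of_nonneg n hω
  · simpa [modSymbol_neg, (even_two_mul _).neg_pow] using
      modSymbol_succ_le_of_nonneg n (neg_nonneg.2 hω)

lemma centralBinomRatio_mul_sin_pow_le_modSymbol_succ_of_nonneg (n : ℕ) {ω : ℝ} (hω₀ : 0 ≤ ω)
    (hωπ : ω ≤ π) : centralBinomRatio (n + 1) * sin ω ^ (2 * (n + 1)) ≤ modSymbol (n + 1) ω := by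
  refine image_le_of_hasDerivAt_le
    (fun y => hasDerivAt_centralBinomRatio_mul_pow (hasDerivAt_sin y) n)
    (hasDerivAt_modSymbol_succ n) ?_ (fun y hy => ?_) ⟨hω₀, hωπ⟩
  · simp [modSymbol_succ_zero]
  · refine mul_le_of_le_one_right (mul_nonneg (mul_nonneg (by positivity)
      (centralBinomRatio_pos n).le) ?_) (cos_le_one y)
    exact pow_nonneg (sin_nonneg_of_nonneg_of_le_pi hy.1 hy.2.le) _

lemma centralBinomRatio_mul_sin_pow_le_modSymbol_succ (n : ℕ) {ω : ℝ} (hω : |ω| ≤ π) :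
    centralBinomRatio (n + 1) * sin ω ^ (2 * (n + 1)) ≤ modSymbol (n + 1) ω := by
  rcases abs_le.1 hω with ⟨hω₁, hω₂⟩
  rcases le_total 0 ω with hω | hω
  · exact centralBinomRatio_mul_sin_pow_le_modSymbol_succ_of_nonneg n hω hω₂
  · simpa [modSymbol_neg, (even_two_mul _).neg_pow] using
      centralBinomRatio_mul_sin_pow_le_modSymbol_succ_of_nonneg n (neg_nonneg.2 hω) (by linarith)

lemma isEquivalent_modSymbol_succ (n : ℕ) :
    modSymbol (n + 1) ~[𝓝 0] fun ω => centralBinomRatio (n + 1) * ω ^ (2 * (n + 1)) := by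
  set v : ℝ → ℝ := fun ω => centralBinomRatio (n + 1) * ω ^ (2 * (n + 1))
  have hsin : (fun ω => centralBinomRatio (n + 1) * sin ω ^ (2 * (n + 1))) ~[𝓝 0] v :=
    IsEquivalent.refl.mul (isEquivalent_sin.pow _)
  have hsandwich : ∀ᶠ ω in 𝓝 0, ‖modSymbol (n + 1) ω - v ω‖ ≤
      ‖centralBinomRatio (n + 1) * sin ω ^ (2 * (n + 1)) - v ω‖ := by
    filter_upwards [Icc_mem_nhds (neg_lt_zero.2 pi_pos) pi_pos] with ω hω
    have hlow := centralBinomRatio_mul_sin_pow_le_modSymbol_succ n (abs_le.2 hω)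
    have hup := modSymbol_succ_le n ω
    rw [Real.norm_of_nonpos (by linarith), Real.norm_of_nonpos (by linarith)]
    linarith
  exact (IsBigO.of_bound' hsandwich).trans_isLittleO hsin

lemma centralBinomRatio_div_pi_pow_mul_le_modSymbol_succ_of_nonneg (n : ℕ) {ω : ℝ} (hω₀ : 0 ≤ ω)
    (hωπ : ω ≤ π) :
    centralBinomRatio (n + 1) / π ^ (2 * (n + 1)) * ω ^ (2 * (n + 1)) ≤ modSymbol (n + 1) ω := by
  have hr := centralBinomRatio_pos (n + 1)
  rcases le_or_gt ω (π / 2) with hω | hω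
  · calc centralBinomRatio (n + 1) / π ^ (2 * (n + 1)) * ω ^ (2 * (n + 1))
          = centralBinomRatio (n + 1) * (1 / π * ω) ^ (2 * (n + 1)) := by ring
      _ ≤ centralBinomRatio (n + 1) * (2 / π * ω) ^ (2 * (n + 1)) := by gcongr; norm_num
      _ ≤ centralBinomRatio (n + 1) * sin ω ^ (2 * (n + 1)) := by gcongr; exact mul_le_sin hω₀ hω
      _ ≤ modSymbol (n + 1) ω :=
          centralBinomRatio_mul_sin_pow_le_modSymbol_succ n (by rwa [abs_of_nonneg hω₀])
  · calc centralBinomRatio (n + 1) / π ^ (2 * (n + 1)) * ω ^ (2 * (n + 1))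
          ≤ centralBinomRatio (n + 1) / π ^ (2 * (n + 1)) * π ^ (2 * (n + 1)) := by gcongr
      _ = centralBinomRatio (n + 1) := div_mul_cancel₀ _ (by positivity)
      _ ≤ 1 := centralBinomRatio_le_one _
      _ ≤ modSymbol (n + 1) ω :=
          one_le_modSymbol (cos_nonpos_of_pi_div_two_le_of_le hω.le (by linarith))

lemma centralBinomRatio_div_pi_pow_mul_le_modSymbol_succ (n : ℕ) {ω : ℝ} (hω : |ω| ≤ π) :
    centralBinomRatio (n + 1) / π ^ (2 * (n + 1)) * ω ^ (2 * (n + 1)) ≤ modSymbol (n + 1) ω := by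
  simpa [modSymbol_abs, (even_two_mul _).pow_abs] using
    centralBinomRatio_div_pi_pow_mul_le_modSymbol_succ_of_nonneg n (abs_nonneg ω) hω

/-- Properties of the modified-energy symbol `f_n`, `n ≥ 1`: (i) `f_n` is even,
`f_n(π/2) = 1` and `x ↦ f_n(x - π/2) - f_n(π/2)` is odd; (ii)
`f_n(ω) ~ (C(2n,n)/4^n) ω^{2n}` as `ω → 0`; (iii) there is `α > 0` with
`α ω^{2n} ≤ f_n(ω) ≤ α⁻¹ ω^{2n}` on `(-π, π)`. -/
theorem modSymbol_properties (n : ℕ) (hn : 1 ≤ n) :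
    (∀ ω : ℝ, modSymbol n (-ω) = modSymbol n ω) ∧
    modSymbol n (Real.pi / 2) = 1 ∧
    (∀ x : ℝ, modSymbol n (-x - Real.pi / 2) - modSymbol n (Real.pi / 2)
        = -(modSymbol n (x - Real.pi / 2) - modSymbol n (Real.pi / 2))) ∧
    Asymptotics.IsEquivalent (𝓝[≠] (0 : ℝ)) (modSymbol n)
      (fun ω => ((Nat.choose (2 * n) n : ℝ) / 4 ^ n) * ω ^ (2 * n)) ∧
    ∃ α > (0 : ℝ), ∀ ω ∈ Set.Ioo (-Real.pi) Real.pi,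
      α * ω ^ (2 * n) ≤ modSymbol n ω ∧ modSymbol n ω ≤ α⁻¹ * ω ^ (2 * n) := by
  obtain ⟨n, rfl⟩ : ∃ m, n = m + 1 := ⟨n - 1, by omega⟩
  refine ⟨modSymbol_neg _, modSymbol_pi_div_two _, fun x => ?_,
    (isEquivalent_modSymbol_succ n).mono nhdsWithin_le_nhds, ?_⟩
  · have := modSymbol_pi_div_two_add_add_modSymbol_pi_div_two_sub (n + 1) x
    rw [show -x - π / 2 = -(π / 2 + x) by ring, show x - π / 2 = -(π / 2 - x) by ring,
      modSymbol_neg, modSymbol_neg, modSymbol_pi_div_two]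
    linarith
  set r := centralBinomRatio (n + 1)
  have hr := centralBinomRatio_pos (n + 1)
  have hπ : 1 ≤ π ^ (2 * (n + 1)) := one_le_pow₀ (by linarith [pi_gt_three])
  refine ⟨r / π ^ (2 * (n + 1)), by positivity, fun ω hω => ⟨?_, ?_⟩⟩
  · exact centralBinomRatio_div_pi_pow_mul_le_modSymbol_succ n (abs_le.2 ⟨hω.1.le, hω.2.le⟩)
  · refine (modSymbol_succ_le n ω).trans
      (mul_le_mul_of_nonneg_right ?_ ((even_two_mul _).pow_nonneg ω))
    rw [inv_div, le_div_iff₀ hr]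
    nlinarith [centralBinomRatio_le_one (n + 1)]
end
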